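/- arXiv:2109.03746 — 5 statements merged into one kernel-verified Lean document; each statement's English description precedes it below -/
import Mathlib

section
/- On the elliptic curve E : y² = x³ − x² − 6x (that is, y² = x(x+2)(x−3)) over ℚ, the point P = (−1, 2) has infinite order; moreover, for every nonzero integer n, writing x for the x-coordinate of the point 2nP, the rational number (x + 1)·(x + 2209/4225) is a sum of two squares of rational numbers. (Here −1 is the x-coordinate of P and −2209/4225 is the x-coordinate of 3P.) -/
/-! On a curve `y² = x³ + a₂x² + a₄x` the doubling formula reads
`x(2Q) = ((x² - a₄) / 2y)²`, so `x(2nP)` is a square `a²`, and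
`(a² + 1)(a² + (47/65)²)` is a sum of two squares by the Brahmagupta–Fibonacci identity.
If moreover `a₂, a₄` are `2`-adic integers and `|x(Q)|₂ > 1`, then `|y|₂² = |x|₂³` and the same
formula gives `|x(2Q)|₂ = 4 |x(Q)|₂`; hence the points `2ᵏQ` are pairwise distinct and `Q` has
infinite order. For `P = (-1, 2)` on `E3` we have `x(2P) = 49/16`, of `2`-adic norm `16`. -/

open WeierstrassCurve WeierstrassCurve.Affine

/-- The `x`-coordinate of a point on a Weierstrass curve in affine coordinates,
with junk value `0` for the point at infinity. -/
noncomputable def xcoord {F : Type*} [Field F] {W : WeierstrassCurve.Affine F} :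
    W.Point → F
  | .zero => 0
  | @WeierstrassCurve.Affine.Point.some _ _ _ x _ _ => x

/-- The elliptic curve `y² = x³ − x² − 6x`, i.e. `y² = x(x+2)(x−3)`, over `ℚ`. -/
def E3 : WeierstrassCurve ℚ := ⟨0, -1, 0, -6, 0⟩

namespace padicNorm

variable {p : ℕ} [Fact p.Prime]

protected lemma pow (q : ℚ) (n : ℕ) : padicNorm p (q ^ n) = padicNorm p q ^ n :=
  IsAbsoluteValue.abv_pow _ q n

lemma add_eq_left_of_lt {a b : ℚ} (h : padicNorm p b < padicNorm p a) :
    padicNorm p (a + b) = padicNorm p a := by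
  rw [add_eq_max_of_ne h.ne', max_eq_left h.le]

end padicNorm

namespace WeierstrassCurve.Affine

variable {F : Type*} [Field F] {W : WeierstrassCurve.Affine F} {x y : F}

@[simp] lemma xcoord_some (h : W.Nonsingular x y) : xcoord (Point.some x y h) = x := rfl

@[simp] lemma xcoord_zero : xcoord (0 : W.Point) = 0 := rfl

lemma negY_eq_neg (ha₁ : W.a₁ = 0) (ha₃ : W.a₃ = 0) : W.negY x y = -y := by
  simp [negY, ha₁, ha₃]

lemma equation_iff_of_a₁_a₃_a₆_eq_zero (ha₁ : W.a₁ = 0) (ha₃ : W.a₃ = 0) (ha₆ : W.a₆ = 0) :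
    W.Equation x y ↔ y ^ 2 = x ^ 3 + W.a₂ * x ^ 2 + W.a₄ * x := by
  simp [equation_iff, ha₁, ha₃, ha₆]

lemma xcoord_two_zsmul_some [DecidableEq F] (ha₁ : W.a₁ = 0) (ha₃ : W.a₃ = 0) (ha₆ : W.a₆ = 0)
    (h : W.Nonsingular x y) (hy : y ≠ W.negY x y) :
    xcoord ((2 : ℤ) • Point.some x y h) = ((x ^ 2 - W.a₄) / (2 * y)) ^ 2 := by
  have hxy := (equation_iff_of_a₁_a₃_a₆_eq_zero ha₁ ha₃ ha₆).1 h.1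
  rw [two_zsmul, Point.add_self_of_Y_ne hy, xcoord_some, slope_of_Y_ne rfl hy, addX]
  rw [negY_eq_neg ha₁ ha₃] at hy ⊢
  rw [ha₁, sub_neg_eq_add, ← two_mul]
  have h2y : 2 * y ≠ 0 := fun h0 => hy (by linear_combination h0)
  obtain ⟨h2, hy0⟩ := mul_ne_zero_iff.1 h2y
  field_simp
  linear_combination (-4 * W.a₂ - 8 * x) * hxy

/-- When `2Q = 0` this holds because of the junk value `xcoord 0 = 0`. -/
lemma isSquare_xcoord_two_zsmul [DecidableEq F] (ha₁ : W.a₁ = 0) (ha₃ : W.a₃ = 0)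
    (ha₆ : W.a₆ = 0) (Q : W.Point) : IsSquare (xcoord ((2 : ℤ) • Q)) := by
  rcases Q with _ | ⟨x, y, h⟩
  · exact ⟨0, by simp [← Point.zero_def]⟩
  by_cases hy : y = W.negY x y
  · rw [two_zsmul, Point.add_self_of_Y_eq hy]
    exact ⟨0, by simp⟩
  · rw [xcoord_two_zsmul_some ha₁ ha₃ ha₆ h hy]
    exact IsSquare.sq _

section padicNorm

variable {W : WeierstrassCurve.Affine ℚ} {x y : ℚ}

lemma padicNorm_sq_Y_of_one_lt_padicNorm_X {p : ℕ} [Fact p.Prime] (ha₁ : W.a₁ = 0)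
    (ha₃ : W.a₃ = 0) (ha₆ : W.a₆ = 0) (ha₂ : padicNorm p W.a₂ ≤ 1) (ha₄ : padicNorm p W.a₄ ≤ 1)
    (h : W.Equation x y) (hx : 1 < padicNorm p x) : padicNorm p (y ^ 2) = padicNorm p x ^ 3 := by
  have hlower : padicNorm p (W.a₂ * x ^ 2 + W.a₄ * x) < padicNorm p (x ^ 3) := by
    have hx2 : padicNorm p x ≤ padicNorm p x ^ 2 := by nlinarith
    calc padicNorm p (W.a₂ * x ^ 2 + W.a₄ * x)
        ≤ max (padicNorm p W.a₂ * padicNorm p x ^ 2) (padicNorm p W.a₄ * padicNorm p x) := by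
          rw [← padicNorm.pow, ← padicNorm.mul, ← padicNorm.mul]
          exact padicNorm.nonarchimedean
      _ ≤ padicNorm p x ^ 2 :=
          max_le (mul_le_of_le_one_left (sq_nonneg _) ha₂)
            ((mul_le_of_le_one_left (padicNorm.nonneg _) ha₄).trans hx2)
      _ < padicNorm p (x ^ 3) := by rw [padicNorm.pow]; nlinarith
  rw [(equation_iff_of_a₁_a₃_a₆_eq_zero ha₁ ha₃ ha₆).1 h, add_assoc,
    padicNorm.add_eq_left_of_lt hlower, padicNorm.pow]

lemma padicNorm_two_xcoord_two_zsmul (ha₁ : W.a₁ = 0) (ha₃ : W.a₃ = 0) (ha₆ : W.a₆ = 0)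
    (ha₂ : padicNorm 2 W.a₂ ≤ 1) (ha₄ : padicNorm 2 W.a₄ ≤ 1) {Q : W.Point}
    (hQ : 1 < padicNorm 2 (xcoord Q)) :
    padicNorm 2 (xcoord ((2 : ℤ) • Q)) = 4 * padicNorm 2 (xcoord Q) := by
  rcases Q with _ | ⟨x, y, h⟩
  · simp [← Point.zero_def] at hQ
    linarith
  rw [xcoord_some] at hQ ⊢
  have hy2 := padicNorm_sq_Y_of_one_lt_padicNorm_X ha₁ ha₃ ha₆ ha₂ ha₄ h.1 hQ
  have hy : y ≠ W.negY x y := by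
    rw [negY_eq_neg ha₁ ha₃]
    intro hy
    obtain rfl : y = 0 := by linarith
    rw [zero_pow two_ne_zero, padicNorm.zero] at hy2
    linarith [one_lt_pow₀ hQ (by norm_num : 3 ≠ 0)]
  have hnum : padicNorm 2 (x ^ 2 - W.a₄) = padicNorm 2 x ^ 2 := by
    rw [sub_eq_add_neg, padicNorm.add_eq_left_of_lt, padicNorm.pow]
    rw [padicNorm.neg, padicNorm.pow]
    linarith [one_lt_pow₀ hQ (by norm_num : 2 ≠ 0)]
  have h2 : padicNorm 2 2 = 2⁻¹ := by simpa using padicNorm.padicNorm_p_of_prime (p := 2)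
  rw [padicNorm.pow] at hy2
  rw [xcoord_two_zsmul_some ha₁ ha₃ ha₆ h hy, padicNorm.pow, padicNorm.div, padicNorm.mul, hnum,
    h2, div_pow, mul_pow, hy2]
  field_simp
  ring

lemma padicNorm_two_xcoord_two_pow_zsmul (ha₁ : W.a₁ = 0) (ha₃ : W.a₃ = 0) (ha₆ : W.a₆ = 0)
    (ha₂ : padicNorm 2 W.a₂ ≤ 1) (ha₄ : padicNorm 2 W.a₄ ≤ 1) {Q : W.Point}
    (hQ : 1 < padicNorm 2 (xcoord Q)) (k : ℕ) :
    padicNorm 2 (xcoord (((2 : ℤ) ^ k) • Q)) = 4 ^ k * padicNorm 2 (xcoord Q) := by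
  induction k with
  | zero => simp
  | succ k ih =>
    have hk : 1 < padicNorm 2 (xcoord (((2 : ℤ) ^ k) • Q)) := by
      rw [ih]
      nlinarith [one_le_pow₀ (by norm_num : (1 : ℚ) ≤ 4) (n := k)]
    rw [pow_succ', mul_smul, padicNorm_two_xcoord_two_zsmul ha₁ ha₃ ha₆ ha₂ ha₄ hk, ih]
    ring

lemma not_isOfFinAddOrder_of_one_lt_padicNorm_two_xcoord (ha₁ : W.a₁ = 0) (ha₃ : W.a₃ = 0)
    (ha₆ : W.a₆ = 0) (ha₂ : padicNorm 2 W.a₂ ≤ 1) (ha₄ : padicNorm 2 W.a₄ ≤ 1) {Q : W.Point}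
    (hQ : 1 < padicNorm 2 (xcoord Q)) : ¬IsOfFinAddOrder Q := by
  rw [← infinite_multiples]
  have hinj : Function.Injective fun k : ℕ => ((2 : ℤ) ^ k) • Q := by
    intro k l hkl
    have := congrArg (fun R => padicNorm 2 (xcoord R)) hkl
    simp only [padicNorm_two_xcoord_two_pow_zsmul ha₁ ha₃ ha₆ ha₂ ha₄ hQ] at this
    have hQ₀ : padicNorm 2 (xcoord Q) ≠ 0 := (zero_lt_one.trans hQ).ne'
    exact pow_right_injective₀ (by norm_num : (0 : ℚ) < 4) (by norm_num)
      (mul_right_cancel₀ hQ₀ this)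
  refine Set.infinite_of_injective_forall_mem hinj fun k => ⟨2 ^ k, ?_⟩
  simp [← natCast_zsmul]

end padicNorm

end WeierstrassCurve.Affine

lemma E3_nonsingular : E3.toAffine.Nonsingular (-1) 2 := by
  rw [nonsingular_iff, equation_iff]
  norm_num [E3]

lemma padicNorm_two_xcoord_two_zsmul_E3 :
    padicNorm 2 (xcoord ((2 : ℤ) • Point.some _ _ E3_nonsingular)) = 16 := by
  rw [xcoord_two_zsmul_some rfl rfl rfl _ (by norm_num [negY, E3])]
  have h16 : padicValNat 2 16 = 4 := by
    rw [show 16 = 2 ^ 4 by norm_num, padicValNat.prime_pow]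
  have h49 : padicValNat 2 49 = 0 := padicValNat.eq_zero_of_not_dvd (by norm_num)
  norm_num [E3, padicNorm, padicValRat, padicValInt, h16, h49]

theorem stmt3 :
    ∃ h : E3.toAffine.Nonsingular (-1) 2,
      (∀ n : ℤ, n ≠ 0 → n • (WeierstrassCurve.Affine.Point.some _ _ h) ≠ 0) ∧
      (∀ n : ℤ, n ≠ 0 →
        ∃ r s : ℚ,
          (xcoord ((2 * n) • (WeierstrassCurve.Affine.Point.some _ _ h)) + 1) *
            (xcoord ((2 * n) • (WeierstrassCurve.Affine.Point.some _ _ h)) + 2209 / 4225) =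
          r ^ 2 + s ^ 2) := by
  refine ⟨E3_nonsingular, fun n hn h0 => ?_, fun n _ => ?_⟩
  · have h2P : ¬IsOfFinAddOrder ((2 : ℤ) • Point.some _ _ E3_nonsingular) :=
      not_isOfFinAddOrder_of_one_lt_padicNorm_two_xcoord rfl rfl rfl
        (by exact_mod_cast padicNorm.of_int (p := 2) (-1))
        (by exact_mod_cast padicNorm.of_int (p := 2) (-6))
        (by rw [padicNorm_two_xcoord_two_zsmul_E3]; norm_num)
    exact h2P (isOfFinAddOrder_iff_zsmul_eq_zero.2 ⟨n, hn, h0⟩).zsmul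
  · obtain ⟨a, ha⟩ := isSquare_xcoord_two_zsmul rfl rfl rfl (n • Point.some _ _ E3_nonsingular)
    -- `2209 / 4225 = (47 / 65) ^ 2`; the witnesses come from `sq_add_sq_mul_sq_add_sq`.
    refine ⟨a * a - 47 / 65, a * (47 / 65) + a, ?_⟩
    rw [mul_smul, ha]
    ring
end

section
/- Let E be an elliptic curve over ℚ given by an integral Weierstrass equation and let P ∈ E(ℚ) be a point of infinite order. For a nonzero integer n, let e_n be the positive integer such that the denominator of x(nP) in lowest terms equals e_n² (such e_n exists), and set e_0 = 0. Then for all integers m and n, gcd(e_m, e_n) = e_{gcd(m,n)}, where gcd(m,n) denotes the nonnegative greatest common divisor of m and n. -/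
open WeierstrassCurve WeierstrassCurve.Affine

set_option linter.unusedSectionVars false
set_option maxHeartbeats 1600000
open Polynomial

namespace StrongDiv

variable {p : ℕ} [hp : Fact p.Prime]

/-- `q` is `0` or has `p`-adic valuation at least `j`. -/
def gd (p : ℕ) (j : ℤ) (q : ℚ) : Prop := q = 0 ∨ j ≤ padicValRat p q

lemma gd_zero (j : ℤ) : gd p j 0 := Or.inl rfl

lemma gd_mono {i j : ℤ} {q : ℚ} (h : gd p j q) (hij : i ≤ j) : gd p i q :=
  h.imp id fun h' => hij.trans h'

lemma gd_val {j : ℤ} {q : ℚ} (hq : q ≠ 0) (h : gd p j q) : j ≤ padicValRat p q :=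
  h.resolve_left hq

lemma gd_of_val {j : ℤ} {q : ℚ} (h : j ≤ padicValRat p q) : gd p j q := Or.inr h

lemma gd_neg {j : ℤ} {q : ℚ} (h : gd p j q) : gd p j (-q) := by
  rcases h with h | h
  · exact Or.inl (by simp [h])
  · exact Or.inr (by rwa [padicValRat.neg])

lemma gd_add {j : ℤ} {a b : ℚ} (ha : gd p j a) (hb : gd p j b) : gd p j (a + b) := by
  rcases ha with ha | ha
  · simpa [ha] using hb
  rcases hb with hb | hb
  · rw [hb, add_zero]; exact Or.inr ha
  by_cases hab : a + b = 0
  · exact Or.inl hab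
  · exact Or.inr <| le_trans (le_min ha hb) (padicValRat.min_le_padicValRat_add hab)

lemma gd_sub {j : ℤ} {a b : ℚ} (ha : gd p j a) (hb : gd p j b) : gd p j (a - b) := by
  rw [sub_eq_add_neg]; exact gd_add ha (gd_neg hb)

lemma gd_mul {i j : ℤ} {a b : ℚ} (ha : gd p i a) (hb : gd p j b) : gd p (i + j) (a * b) := by
  rcases ha with ha | ha
  · exact Or.inl (by simp [ha])
  rcases hb with hb | hb
  · exact Or.inl (by simp [hb])
  by_cases h0 : a = 0
  · exact Or.inl (by simp [h0])
  by_cases h1 : b = 0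
  · exact Or.inl (by simp [h1])
  exact Or.inr <| by rw [padicValRat.mul h0 h1]; exact add_le_add ha hb

lemma gd_int (n : ℤ) : gd p 0 (n : ℚ) := by
  by_cases h : (n : ℚ) = 0
  · exact Or.inl h
  · refine Or.inr ?_
    rw [padicValRat.of_int]
    positivity

/-- if `v q < j ≤ v r` then `q + r ≠ 0` and `v (q + r) = v q`. -/
lemma add_gd_val {j : ℤ} {q r : ℚ} (hq : q ≠ 0) (hr : gd p j r)
    (hlt : padicValRat p q < j) :
    q + r ≠ 0 ∧ padicValRat p (q + r) = padicValRat p q := by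
  rcases hr with hr | hr
  · simp [hr, hq]
  by_cases hr0 : r = 0
  · simp [hr0, hq]
  have hne : q + r ≠ 0 := by
    intro h0
    have : r = -q := by linarith [congrArg id h0]
    rw [this, padicValRat.neg] at hr
    omega
  exact ⟨hne, padicValRat.add_eq_of_lt hne hq hr0 (hlt.trans_le hr)⟩

lemma gd_one_sub {c : ℚ} (h : gd p 1 c) :
    1 - c ≠ 0 ∧ padicValRat p (1 - c) = 0 := by
  have h1 : (1 : ℚ) ≠ 0 := one_ne_zero
  have hv1 : padicValRat p 1 = 0 := padicValRat.one
  have := add_gd_val (p := p) h1 (gd_neg h) (by rw [hv1]; norm_num)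
  rw [← sub_eq_add_neg] at this
  exact ⟨this.1, by rw [this.2, hv1]⟩

lemma gd_sq {j : ℤ} {q : ℚ} (h : gd p j q) : gd p (2 * j) (q ^ 2) := by
  by_cases h0 : q = 0
  · exact Or.inl (by simp [h0])
  · rcases h with h | h
    · exact absurd h h0
    · refine Or.inr ?_
      rw [padicValRat.pow q]
      push_cast
      omega

lemma val_neg_one_div {q : ℚ} (hq : q ≠ 0) :
    padicValRat p (-1 / q) = -padicValRat p q := by
  rw [neg_div, padicValRat.neg, one_div, padicValRat.inv]

section Curve

variable {p : ℕ} [hp : Fact p.Prime] {a1 a2 a3 a4 a6 : ℚ}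
  (ha1 : gd p 0 a1) (ha2 : gd p 0 a2) (ha3 : gd p 0 a3) (ha4 : gd p 0 a4) (ha6 : gd p 0 a6)

include ha1 ha2 ha3 ha4 ha6

/-- Structure of a point with very negative x-valuation. -/
lemma struct {x y : ℚ} {k : ℤ} (hk : 1 ≤ k)
    (hE : y ^ 2 + a1 * x * y + a3 * y = x ^ 3 + a2 * x ^ 2 + a4 * x + a6)
    (hv : padicValRat p x ≤ -(2 * k)) :
    ∃ m : ℤ, k ≤ m ∧ x ≠ 0 ∧ y ≠ 0 ∧
      padicValRat p x = -(2 * m) ∧ padicValRat p y = -(3 * m) := by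
  have hx0 : x ≠ 0 := by
    rintro rfl
    rw [padicValRat.zero] at hv; omega
  set u := padicValRat p x with hu
  have hu0 : u < 0 := by omega
  have hvx2 : padicValRat p (x ^ 2) = 2 * u := by
    rw [padicValRat.pow x]; push_cast; ring
  have hvx3 : padicValRat p (x ^ 3) = 3 * u := by
    rw [padicValRat.pow x]; push_cast; ring
  have hrgd : gd p (2 * u) (a2 * x ^ 2 + a4 * x + a6) := by
    refine gd_add (gd_add ?_ ?_) ?_
    · simpa using gd_mul ha2 (gd_of_val hvx2.ge)
    · exact gd_mono (by simpa using gd_mul ha4 (gd_of_val (le_of_eq hu.symm))) (by omega)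
    · exact gd_mono ha6 (by omega)
  have hx3 : x ^ 3 ≠ 0 := pow_ne_zero 3 hx0
  have hRHS := add_gd_val hx3 hrgd (by omega)
  rw [show x ^ 3 + (a2 * x ^ 2 + a4 * x + a6) = x ^ 3 + a2 * x ^ 2 + a4 * x + a6 by ring]
    at hRHS
  have hy0 : y ≠ 0 := by
    rintro rfl
    have h0 : x ^ 3 + a2 * x ^ 2 + a4 * x + a6 = 0 := by linear_combination -hE
    exact hRHS.1 h0
  set s := y + (a1 * x + a3) with hs
  have hEs : y * s = x ^ 3 + a2 * x ^ 2 + a4 * x + a6 := by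
    rw [hs]; linear_combination hE
  have hgax : gd p u (a1 * x + a3) := by
    refine gd_add ?_ (gd_mono ha3 hu0.le)
    simpa using gd_mul ha1 (gd_of_val (le_of_eq hu.symm))
  by_cases ht : u ≤ padicValRat p y
  · exfalso
    have hsgd : gd p u s := gd_add (gd_of_val ht) hgax
    have hs0 : s ≠ 0 := by
      intro h0
      rw [h0, mul_zero] at hEs
      exact hRHS.1 hEs.symm
    have hvmul : padicValRat p (y * s) = padicValRat p y + padicValRat p s :=
      padicValRat.mul hy0 hs0
    rw [hEs, hRHS.2, hvx3] at hvmul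
    have h1 := gd_val hs0 hsgd
    omega
  · push_neg at ht
    have hsv := add_gd_val hy0 hgax ht
    rw [← hs] at hsv
    have hvmul : padicValRat p (y * s) = padicValRat p y + padicValRat p s :=
      padicValRat.mul hy0 hsv.1
    rw [hEs, hRHS.2, hvx3, hsv.2] at hvmul
    -- 3u = 2 * v(y)
    refine ⟨u - padicValRat p y, by omega, hx0, hy0, by omega, by omega⟩

/-- Converse: very negative y-valuation forces very negative x-valuation. -/
lemma struct2 {x y : ℚ} {k : ℤ} (hk : 1 ≤ k)
    (hE : y ^ 2 + a1 * x * y + a3 * y = x ^ 3 + a2 * x ^ 2 + a4 * x + a6)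
    (hvy : padicValRat p y ≤ -(3 * k)) :
    padicValRat p x ≤ -(2 * k) := by
  by_contra hvx
  push_neg at hvx
  have hy0 : y ≠ 0 := by
    rintro rfl
    rw [padicValRat.zero] at hvy; omega
  set s := y + (a1 * x + a3) with hs
  have hEs : y * s = x ^ 3 + a2 * x ^ 2 + a4 * x + a6 := by
    rw [hs]; linear_combination hE
  by_cases hgx : gd p 0 x
  · have hgax : gd p 0 (a1 * x + a3) := gd_add (by simpa using gd_mul ha1 hgx) ha3
    have hsv := add_gd_val hy0 hgax (by omega)
    rw [← hs] at hsv
    have hLne : y * s ≠ 0 := mul_ne_zero hy0 hsv.1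
    have hvL : padicValRat p (y * s) = 2 * padicValRat p y := by
      rw [padicValRat.mul hy0 hsv.1, hsv.2]; ring
    have hRgd : gd p 0 (x ^ 3 + a2 * x ^ 2 + a4 * x + a6) := by
      have hx2 : gd p 0 (x ^ 2) := by
        have := gd_mul hgx hgx; rw [show x * x = x ^ 2 by ring] at this; simpa using this
      have hx3 : gd p 0 (x ^ 3) := by
        have := gd_mul hgx hx2; rw [show x * x ^ 2 = x ^ 3 by ring] at this; simpa using this
      exact gd_add (gd_add (gd_add hx3 (by simpa using gd_mul ha2 hx2))
        (by simpa using gd_mul ha4 hgx)) ha6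
    have hRne : x ^ 3 + a2 * x ^ 2 + a4 * x + a6 ≠ 0 := by rw [← hEs]; exact hLne
    have := gd_val hRne hRgd
    rw [← hEs, hvL] at this
    omega
  · have hx0 : x ≠ 0 := by rintro rfl; exact hgx (gd_zero 0)
    have hvxneg : padicValRat p x < 0 := by
      by_contra h'; push_neg at h'; exact hgx (gd_of_val h')
    set u := padicValRat p x with hu
    have hvx2 : padicValRat p (x ^ 2) = 2 * u := by
      rw [padicValRat.pow x]; push_cast; ring
    have hvx3 : padicValRat p (x ^ 3) = 3 * u := by
      rw [padicValRat.pow x]; push_cast; ring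
    have hgax : gd p u (a1 * x + a3) := by
      refine gd_add ?_ (gd_mono ha3 hvxneg.le)
      simpa using gd_mul ha1 (gd_of_val (le_of_eq hu.symm))
    have hsv := add_gd_val hy0 hgax (by omega)
    rw [← hs] at hsv
    have hLne : y * s ≠ 0 := mul_ne_zero hy0 hsv.1
    have hvL : padicValRat p (y * s) = 2 * padicValRat p y := by
      rw [padicValRat.mul hy0 hsv.1, hsv.2]; ring
    have hRgd : gd p (3 * u) (x ^ 3 + a2 * x ^ 2 + a4 * x + a6) := by
      refine gd_add (gd_add (gd_add (gd_of_val hvx3.ge) ?_) ?_) (gd_mono ha6 (by omega))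
      · exact gd_mono (by simpa using gd_mul ha2 (gd_of_val hvx2.ge)) (by omega)
      · exact gd_mono (by simpa using gd_mul ha4 (gd_of_val (le_of_eq hu.symm))) (by omega)
    have hRne : x ^ 3 + a2 * x ^ 2 + a4 * x + a6 ≠ 0 := by rw [← hEs]; exact hLne
    have := gd_val hRne hRgd
    rw [← hEs, hvL] at this
    omega


lemma core_secant {x1 y1 x2 y2 L x3 : ℚ} {k : ℤ} (hk : 1 ≤ k)
    (hE1 : y1 ^ 2 + a1 * x1 * y1 + a3 * y1 = x1 ^ 3 + a2 * x1 ^ 2 + a4 * x1 + a6)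
    (hE2 : y2 ^ 2 + a1 * x2 * y2 + a3 * y2 = x2 ^ 3 + a2 * x2 ^ 2 + a4 * x2 + a6)
    (hx : x1 ≠ x2)
    (hL : L = (y1 - y2) / (x1 - x2))
    (hprod : x1 * x2 * x3 = (y1 - L * x1) ^ 2 + a3 * (y1 - L * x1) - a6)
    (hv1 : padicValRat p x1 ≤ -(2 * k)) (hv2 : padicValRat p x2 ≤ -(2 * k)) :
    padicValRat p x3 ≤ -(2 * k) := by
  obtain ⟨m1, hm1k, hx10, hy10, hvx1, hvy1⟩ := struct ha1 ha2 ha3 ha4 ha6 hk hE1 hv1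
  obtain ⟨m2, hm2k, hx20, hy20, hvx2, hvy2⟩ := struct ha1 ha2 ha3 ha4 ha6 hk hE2 hv2
  obtain ⟨z1, hz1⟩ : ∃ z, z = -x1 / y1 := ⟨_, rfl⟩
  obtain ⟨w1, hw1⟩ : ∃ w, w = -1 / y1 := ⟨_, rfl⟩
  obtain ⟨z2, hz2⟩ : ∃ z, z = -x2 / y2 := ⟨_, rfl⟩
  obtain ⟨w2, hw2⟩ : ∃ w, w = -1 / y2 := ⟨_, rfl⟩
  have hvz1 : padicValRat p z1 = m1 := by
    rw [hz1, neg_div, padicValRat.neg, padicValRat.div hx10 hy10, hvx1, hvy1]; ring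
  have hvz2 : padicValRat p z2 = m2 := by
    rw [hz2, neg_div, padicValRat.neg, padicValRat.div hx20 hy20, hvx2, hvy2]; ring
  have hvw1 : padicValRat p w1 = 3 * m1 := by rw [hw1, val_neg_one_div hy10, hvy1]; ring
  have hvw2 : padicValRat p w2 = 3 * m2 := by rw [hw2, val_neg_one_div hy20, hvy2]; ring
  have hw10 : w1 ≠ 0 := by rw [hw1]; exact div_ne_zero (by norm_num) hy10
  have hw20 : w2 ≠ 0 := by rw [hw2]; exact div_ne_zero (by norm_num) hy20
  have hC1 : z1 ^ 3 + a1 * z1 * w1 + a2 * z1 ^ 2 * w1 + a3 * w1 ^ 2 + a4 * z1 * w1 ^ 2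
      + a6 * w1 ^ 3 = w1 := by
    rw [hz1, hw1]; field_simp; linear_combination hE1
  have hC2 : z2 ^ 3 + a1 * z2 * w2 + a2 * z2 ^ 2 * w2 + a3 * w2 ^ 2 + a4 * z2 * w2 ^ 2
      + a6 * w2 ^ 3 = w2 := by
    rw [hz2, hw2]; field_simp; linear_combination hE2
  -- the common "unit" expression
  obtain ⟨C', hC'⟩ : ∃ C', C' = a1 * z2 + a2 * z2 ^ 2 + a3 * (w1 + w2) + a4 * z2 * (w1 + w2)
      + a6 * (w1 ^ 2 + w1 * w2 + w2 ^ 2) := ⟨_, rfl⟩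
  obtain ⟨A, hA⟩ : ∃ A, A = z1 ^ 2 + z1 * z2 + z2 ^ 2 + a1 * w1 + a2 * w1 * (z1 + z2)
      + a4 * w1 ^ 2 := ⟨_, rfl⟩
  have KID : (w2 - w1) * (1 - C') = (z2 - z1) * A := by
    rw [hC', hA]; linear_combination hC1 - hC2
  have hgdz1 : gd p m1 z1 := gd_of_val hvz1.ge
  have hgdz2 : gd p m2 z2 := gd_of_val hvz2.ge
  have hgdw1 : gd p (3 * m1) w1 := gd_of_val hvw1.ge
  have hgdw2 : gd p (3 * m2) w2 := gd_of_val hvw2.ge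
  have hgdw1' : gd p 1 w1 := gd_mono hgdw1 (by omega)
  have hgdw2' : gd p 1 w2 := gd_mono hgdw2 (by omega)
  have hu1 : gd p 1 (w1 ^ 2) := gd_mono (gd_sq hgdw1) (by omega)
  have hu2 : gd p 1 (w1 * w2) := gd_mono (gd_mul hgdw1 hgdw2) (by omega)
  have hu3 : gd p 1 (w2 ^ 2) := gd_mono (gd_sq hgdw2) (by omega)
  have ht1 : gd p 1 (a1 * z2) := gd_mono (gd_mul ha1 hgdz2) (by omega)
  have ht2 : gd p 1 (a2 * z2 ^ 2) := gd_mono (gd_mul ha2 (gd_sq hgdz2)) (by omega)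
  have ht3 : gd p 1 (a3 * (w1 + w2)) := gd_mono (gd_mul ha3 (gd_add hgdw1' hgdw2')) (by omega)
  have ht4 : gd p 1 (a4 * z2 * (w1 + w2)) :=
    gd_mono (gd_mul (gd_mul ha4 hgdz2) (gd_add hgdw1' hgdw2')) (by omega)
  have ht5 : gd p 1 (a6 * (w1 ^ 2 + w1 * w2 + w2 ^ 2)) :=
    gd_mono (gd_mul ha6 (gd_add (gd_add hu1 hu2) hu3)) (by omega)
  have hgdC' : gd p 1 C' := by
    rw [hC']
    exact gd_add (gd_add (gd_add (gd_add ht1 ht2) ht3) ht4) ht5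
  have hB := gd_one_sub hgdC'
  have hz12 : z1 ≠ z2 := by
    intro h
    have h0 : (w2 - w1) * (1 - C') = 0 := by
      rw [KID, h]; ring
    rcases mul_eq_zero.mp h0 with h1 | h1
    · have hww : w1 = w2 := by linarith [sub_eq_zero.mp h1]
      have hyy : y1 = y2 := by
        rw [hw1, hw2] at hww
        field_simp at hww
        linarith
      have hxx : x1 = x2 := by
        rw [hz1, hz2, hyy] at h
        field_simp at h
        linarith
      exact hx hxx
    · exact hB.1 h1
  have hy1l : y1 = L * x1 + (y1 - L * x1) := by ring
  have hx12 : x1 - x2 ≠ 0 := sub_ne_zero.mpr hx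
  have hy2l : y2 = L * x2 + (y1 - L * x1) := by
    rw [hL]; field_simp; ring
  obtain ⟨c, hcdef⟩ : ∃ c, c = y1 - L * x1 := ⟨_, rfl⟩
  rw [← hcdef] at hy1l hy2l hprod
  have hc : c ≠ 0 := by
    intro h0
    rw [h0, add_zero] at hy1l hy2l
    have hL0 : L ≠ 0 := by
      intro h1; rw [h1, zero_mul] at hy1l; exact hy10 hy1l
    apply hz12
    rw [hz1, hz2, hy1l, hy2l]
    field_simp
  obtain ⟨lam, hlam⟩ : ∃ l, l = -L / c := ⟨_, rfl⟩
  obtain ⟨nu, hnu⟩ : ∃ n, n = -1 / c := ⟨_, rfl⟩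
  have l1 : w1 = lam * z1 + nu := by
    rw [hw1, hz1, hlam, hnu]; field_simp; linear_combination hy1l
  have l2 : w2 = lam * z2 + nu := by
    rw [hw2, hz2, hlam, hnu]; field_simp; linear_combination hy2l
  have hlm : w2 - w1 = lam * (z2 - z1) := by linear_combination l2 - l1
  have hlamB : lam * (1 - C') = A := by
    apply mul_left_cancel₀ (sub_ne_zero.mpr (Ne.symm hz12))
    linear_combination KID - (1 - C') * hlm
  obtain ⟨m, hmdef⟩ : ∃ m, m = min m1 m2 := ⟨_, rfl⟩
  have hmm1 : m ≤ m1 := hmdef ▸ min_le_left _ _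
  have hmm2 : m ≤ m2 := hmdef ▸ min_le_right _ _
  have hmk : k ≤ m := hmdef ▸ le_min hm1k hm2k
  have hgdzm1 : gd p m z1 := gd_mono hgdz1 (by omega)
  have hgdzm2 : gd p m z2 := gd_mono hgdz2 (by omega)
  have hs1 : gd p (2 * m) (z1 ^ 2) := gd_mono (gd_sq hgdz1) (by omega)
  have hs2 : gd p (2 * m) (z1 * z2) := gd_mono (gd_mul hgdz1 hgdz2) (by omega)
  have hs3 : gd p (2 * m) (z2 ^ 2) := gd_mono (gd_sq hgdz2) (by omega)
  have hs4 : gd p (2 * m) (a1 * w1) := gd_mono (gd_mul ha1 hgdw1) (by omega)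
  have hs5 : gd p (2 * m) (a2 * w1 * (z1 + z2)) :=
    gd_mono (gd_mul (gd_mul ha2 hgdw1) (gd_add hgdzm1 hgdzm2)) (by omega)
  have hs6 : gd p (2 * m) (a4 * w1 ^ 2) := gd_mono (gd_mul ha4 (gd_sq hgdw1)) (by omega)
  have hgdA : gd p (2 * m) A := by
    rw [hA]
    exact gd_add (gd_add (gd_add (gd_add (gd_add hs1 hs2) hs3) hs4) hs5) hs6
  have hgdlam : gd p (2 * m) lam := by
    by_cases hA0 : A = 0
    · left
      rcases mul_eq_zero.mp (hlamB.trans hA0) with h | h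
      · exact h
      · exact absurd h hB.1
    · right
      have hlam0 : lam ≠ 0 := by
        intro h0; rw [h0, zero_mul] at hlamB; exact hA0 hlamB.symm
      have := padicValRat.mul (p := p) hlam0 hB.1
      rw [hlamB, hB.2, add_zero] at this
      rw [← this]
      exact gd_val hA0 hgdA
  have hnu1 : nu = w1 - lam * z1 := by linear_combination -l1
  have hnu2 : nu = w2 - lam * z2 := by linear_combination -l2
  have hgdnu1 : gd p (m1 + 2 * m) nu := by
    rw [hnu1]
    exact gd_sub (gd_mono hgdw1 (by omega)) (gd_mono (gd_mul hgdlam hgdz1) (by omega))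
  have hgdnu2 : gd p (m2 + 2 * m) nu := by
    rw [hnu2]
    exact gd_sub (gd_mono hgdw2 (by omega)) (gd_mono (gd_mul hgdlam hgdz2) (by omega))
  have hgdnu : gd p (m1 + m2 + m) nu := by
    rcases le_total m1 m2 with h | h
    · have hme : m = m1 := by omega
      exact gd_mono hgdnu2 (by omega)
    · have hme : m = m2 := by omega
      exact gd_mono hgdnu1 (by omega)
  have hnu0 : nu ≠ 0 := by
    rw [hnu]; exact div_ne_zero (by norm_num) hc
  have he : m1 + m2 + m ≤ padicValRat p nu := gd_val hnu0 hgdnu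
  have hcnu : c = -1 / nu := by rw [hnu]; field_simp
  have hvc : padicValRat p c = -padicValRat p nu := by
    rw [hcnu, val_neg_one_div hnu0]
  have hc2 : c ^ 2 ≠ 0 := pow_ne_zero 2 hc
  have hvc2 : padicValRat p (c ^ 2) = -(2 * padicValRat p nu) := by
    rw [padicValRat.pow c, hvc]; push_cast; ring
  have hgdrest : gd p (-padicValRat p nu) (a3 * c - a6) := by
    refine gd_sub ?_ (gd_mono ha6 (by omega))
    exact gd_mono (gd_mul ha3 (gd_of_val hvc.ge)) (by omega)
  have hDD := add_gd_val hc2 hgdrest (by omega)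
  rw [show c ^ 2 + (a3 * c - a6) = c ^ 2 + a3 * c - a6 by ring] at hDD
  have hx30 : x3 ≠ 0 := by
    intro h0
    rw [h0, mul_zero] at hprod
    exact hDD.1 hprod.symm
  have hfin : padicValRat p (x1 * x2 * x3) = padicValRat p (c ^ 2 + a3 * c - a6) := by
    rw [hprod]
  rw [padicValRat.mul (mul_ne_zero hx10 hx20) hx30, padicValRat.mul hx10 hx20,
    hDD.2, hvc2, hvx1, hvx2] at hfin
  omega


lemma core_tangent {x1 y1 L x3 : ℚ} {k : ℤ} (hk : 1 ≤ k)
    (hE1 : y1 ^ 2 + a1 * x1 * y1 + a3 * y1 = x1 ^ 3 + a2 * x1 ^ 2 + a4 * x1 + a6)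
    (hLd : L * (2 * y1 + a1 * x1 + a3) = 3 * x1 ^ 2 + 2 * a2 * x1 + a4 - a1 * y1)
    (hprod : x1 * x1 * x3 = (y1 - L * x1) ^ 2 + a3 * (y1 - L * x1) - a6)
    (hv1 : padicValRat p x1 ≤ -(2 * k)) :
    padicValRat p x3 ≤ -(2 * k) := by
  obtain ⟨m, hmk, hx10, hy10, hvx1, hvy1⟩ := struct ha1 ha2 ha3 ha4 ha6 hk hE1 hv1
  have gd2 : gd p 0 (2 : ℚ) := by simpa using gd_int (p := p) 2
  have gd3 : gd p 0 (3 : ℚ) := by simpa using gd_int (p := p) 3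
  have hgdx1 : gd p (-(2 * m)) x1 := gd_of_val hvx1.ge
  have hgdy1 : gd p (-(3 * m)) y1 := gd_of_val hvy1.ge
  obtain ⟨z1, hz1⟩ : ∃ z, z = -x1 / y1 := ⟨_, rfl⟩
  obtain ⟨w1, hw1⟩ : ∃ w, w = -1 / y1 := ⟨_, rfl⟩
  have hvz1 : padicValRat p z1 = m := by
    rw [hz1, neg_div, padicValRat.neg, padicValRat.div hx10 hy10, hvx1, hvy1]; ring
  have hvw1 : padicValRat p w1 = 3 * m := by rw [hw1, val_neg_one_div hy10, hvy1]; ring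
  have hw10 : w1 ≠ 0 := by rw [hw1]; exact div_ne_zero (by norm_num) hy10
  have hgdz1 : gd p m z1 := gd_of_val hvz1.ge
  have hgdw1 : gd p (3 * m) w1 := gd_of_val hvw1.ge
  obtain ⟨c, hcdef⟩ : ∃ c, c = y1 - L * x1 := ⟨_, rfl⟩
  rw [← hcdef] at hprod
  have hc : c ≠ 0 := by
    intro h0
    have hy1l : y1 = L * x1 := by
      have := hcdef.symm.trans h0
      linarith
    have hkey : x1 ^ 3 = a4 * x1 + 2 * a6 - a3 * y1 := by
      linear_combination 2 * hE1 - x1 * hLd - (2 * y1 + a1 * x1 + a3) * hy1l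
    have hx13 : x1 ^ 3 ≠ 0 := pow_ne_zero 3 hx10
    have hvx13 : padicValRat p (x1 ^ 3) = -(6 * m) := by
      rw [padicValRat.pow x1, hvx1]; push_cast; ring
    have hgdrhs : gd p (-(3 * m)) (a4 * x1 + 2 * a6 - a3 * y1) := by
      refine gd_sub (gd_add ?_ ?_) ?_
      · exact gd_mono (gd_mul ha4 hgdx1) (by omega)
      · exact gd_mono (gd_mul gd2 ha6) (by omega)
      · exact gd_mono (gd_mul ha3 hgdy1) (by omega)
    have := gd_val hx13 (hkey ▸ hgdrhs)
    rw [hvx13] at this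
    omega
  obtain ⟨At, hAt⟩ : ∃ A, A = 3 * x1 ^ 2 - a1 * y1 + 2 * a2 * x1 + a4 := ⟨_, rfl⟩
  obtain ⟨Bt, hBt⟩ : ∃ B, B = a1 * x1 * y1 - a2 * x1 ^ 2 + 2 * a3 * y1 - 2 * a4 * x1 - 3 * a6 :=
    ⟨_, rfl⟩
  have hK : (-L) * (y1 ^ 2 + Bt) = c * At := by
    rw [hAt, hBt]
    linear_combination (-3 * L) * hE1 + y1 * hLd -
      (3 * x1 ^ 2 - a1 * y1 + 2 * a2 * x1 + a4) * hcdef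
  have hvy12 : padicValRat p (y1 ^ 2) = -(6 * m) := by
    rw [padicValRat.pow y1, hvy1]; push_cast; ring
  have hgdBt : gd p (-(5 * m)) Bt := by
    rw [hBt]
    refine gd_sub (gd_sub (gd_add (gd_sub ?_ ?_) ?_) ?_) ?_
    · exact gd_mono (gd_mul (gd_mul ha1 hgdx1) hgdy1) (by omega)
    · exact gd_mono (gd_mul ha2 (gd_sq hgdx1)) (by omega)
    · exact gd_mono (gd_mul (gd_mul gd2 ha3) hgdy1) (by omega)
    · exact gd_mono (gd_mul (gd_mul gd2 ha4) hgdx1) (by omega)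
    · exact gd_mono (gd_mul gd3 ha6) (by omega)
  have hBsum := add_gd_val (pow_ne_zero 2 hy10) hgdBt (by rw [hvy12]; omega)
  have hgdAt : gd p (-(4 * m)) At := by
    rw [hAt]
    refine gd_add (gd_add (gd_sub ?_ ?_) ?_) ?_
    · exact gd_mono (gd_mul gd3 (gd_sq hgdx1)) (by omega)
    · exact gd_mono (gd_mul ha1 hgdy1) (by omega)
    · exact gd_mono (gd_mul (gd_mul gd2 ha2) hgdx1) (by omega)
    · exact gd_mono ha4 (by omega)
  obtain ⟨lam, hlam⟩ : ∃ l, l = -L / c := ⟨_, rfl⟩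
  obtain ⟨nu, hnu⟩ : ∃ n, n = -1 / c := ⟨_, rfl⟩
  have hgdlam : gd p (2 * m) lam := by
    by_cases hA0 : At = 0
    · left
      rw [hA0, mul_zero] at hK
      rcases mul_eq_zero.mp hK with h | h
      · rw [hlam, neg_eq_zero.mp h]; simp
      · exact absurd h hBsum.1
    · right
      have hL0 : L ≠ 0 := by
        intro h1
        rw [h1, neg_zero, zero_mul] at hK
        exact hA0 (by
          rcases mul_eq_zero.mp hK.symm with h | h
          · exact absurd h hc
          · exact h)
      have hlam0 : -L ≠ 0 := neg_ne_zero.mpr hL0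
      have hmul1 : padicValRat p (-L) + padicValRat p (y1 ^ 2 + Bt) =
          padicValRat p c + padicValRat p At := by
        rw [← padicValRat.mul hlam0 hBsum.1, ← padicValRat.mul hc hA0, hK]
      have hAtv := gd_val hA0 hgdAt
      rw [hlam, padicValRat.div hlam0 hc, padicValRat.neg]
      rw [hBsum.2, hvy12, padicValRat.neg] at hmul1
      omega
  have hy1l' : y1 = L * x1 + c := by rw [hcdef]; ring
  have l1 : w1 = lam * z1 + nu := by
    rw [hw1, hz1, hlam, hnu]; field_simp; linear_combination hy1l'
  have hnu1 : nu = w1 - lam * z1 := by linear_combination -l1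
  have hgdnu : gd p (3 * m) nu := by
    rw [hnu1]
    exact gd_sub (gd_mono hgdw1 (by omega)) (gd_mono (gd_mul hgdlam hgdz1) (by omega))
  have hnu0 : nu ≠ 0 := by rw [hnu]; exact div_ne_zero (by norm_num) hc
  have he : 3 * m ≤ padicValRat p nu := gd_val hnu0 hgdnu
  have hcnu : c = -1 / nu := by rw [hnu]; field_simp
  have hvc : padicValRat p c = -padicValRat p nu := by rw [hcnu, val_neg_one_div hnu0]
  have hc2 : c ^ 2 ≠ 0 := pow_ne_zero 2 hc
  have hvc2 : padicValRat p (c ^ 2) = -(2 * padicValRat p nu) := by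
    rw [padicValRat.pow c, hvc]; push_cast; ring
  have hgdrest : gd p (-padicValRat p nu) (a3 * c - a6) := by
    refine gd_sub ?_ (gd_mono ha6 (by omega))
    exact gd_mono (gd_mul ha3 (gd_of_val hvc.ge)) (by omega)
  have hDD := add_gd_val hc2 hgdrest (by omega)
  rw [show c ^ 2 + (a3 * c - a6) = c ^ 2 + a3 * c - a6 by ring] at hDD
  have hx30 : x3 ≠ 0 := by
    intro h0
    rw [h0, mul_zero] at hprod
    exact hDD.1 hprod.symm
  have hfin : padicValRat p (x1 * x1 * x3) = padicValRat p (c ^ 2 + a3 * c - a6) := by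
    rw [hprod]
  rw [padicValRat.mul (mul_ne_zero hx10 hx10) hx30, padicValRat.mul hx10 hx10,
    hDD.2, hvc2, hvx1] at hfin
  omega


end Curve

variable {W : Affine ℚ}

lemma addX_val
    (ha1 : gd p 0 W.a₁) (ha2 : gd p 0 W.a₂) (ha3 : gd p 0 W.a₃) (ha4 : gd p 0 W.a₄)
    (ha6 : gd p 0 W.a₆) {k : ℤ} (hk : 1 ≤ k) {x1 y1 x2 y2 : ℚ}
    (h1 : W.Equation x1 y1) (h2 : W.Equation x2 y2)
    (hxy : x1 = x2 → y1 ≠ W.negY x2 y2)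
    (hv1 : padicValRat p x1 ≤ -(2 * k)) (hv2 : padicValRat p x2 ≤ -(2 * k)) :
    padicValRat p (W.addX x1 x2 (W.slope x1 x2 y1 y2)) ≤ -(2 * k) := by
  have hE1 := (W.equation_iff x1 y1).mp h1
  have hE2 := (W.equation_iff x2 y2).mp h2
  have hps := addPolynomial_slope h1 h2 (fun h => hxy h.1 h.2)
  have heval := congrArg (Polynomial.eval (0 : ℚ)) hps
  simp only [addPolynomial, linePolynomial, WeierstrassCurve.Affine.polynomial,
    eval_add, eval_sub, eval_mul, eval_pow, eval_neg, eval_C, eval_X, eval_zero,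
    Polynomial.eval_ofNat] at heval
  set L := W.slope x1 x2 y1 y2 with hLdef
  set x3 := W.addX x1 x2 L with hx3def
  have hprod0 := heval
  have hprod : x1 * x2 * x3 = (y1 - L * x1) ^ 2 + W.a₃ * (y1 - L * x1) - W.a₆ := by
    linear_combination -hprod0
  by_cases hx : x1 = x2
  · subst hx
    have hy12 : y1 = y2 := Y_eq_of_Y_ne h1 h2 rfl (hxy rfl)
    subst hy12
    have hyn := hxy rfl
    have hden : y1 - W.negY x1 y1 ≠ 0 := sub_ne_zero.mpr hyn
    have hden2 : y1 - W.negY x1 y1 = 2 * y1 + W.a₁ * x1 + W.a₃ := by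
      rw [negY]; ring
    have hsl : L = (3 * x1 ^ 2 + 2 * W.a₂ * x1 + W.a₄ - W.a₁ * y1) / (y1 - W.negY x1 y1) :=
      slope_of_Y_ne rfl hyn
    have hLd : L * (2 * y1 + W.a₁ * x1 + W.a₃) =
        3 * x1 ^ 2 + 2 * W.a₂ * x1 + W.a₄ - W.a₁ * y1 := by
      rw [hsl, ← hden2, div_mul_cancel₀ _ hden]
    exact core_tangent ha1 ha2 ha3 ha4 ha6 hk hE1 hLd hprod hv1
  · have hsl : L = (y1 - y2) / (x1 - x2) := slope_of_X_ne hx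
    exact core_secant ha1 ha2 ha3 ha4 ha6 hk hE1 hE2 hx hsl hprod hv1 hv2


/-- bridge between denominator and valuation -/
lemma den_val (q : ℚ) {j : ℤ} (hj : 1 ≤ j) :
    padicValRat p q ≤ -j ↔ j ≤ (padicValNat p q.den : ℤ) := by
  rw [padicValRat_def]
  constructor
  · intro h
    have : (0 : ℤ) ≤ (padicValInt p q.num : ℤ) := Int.natCast_nonneg _
    omega
  · intro h
    have hdvd : p ∣ q.den := by
      apply dvd_of_one_le_padicValNat
      omega
    have hnotdvd : ¬ (p : ℤ) ∣ q.num := by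
      intro hdvd2
      have h1 : p ∣ q.num.natAbs := by simpa using Int.natAbs_dvd_natAbs.mpr hdvd2
      have hg := Nat.dvd_gcd h1 hdvd
      rw [q.reduced] at hg
      exact hp.out.ne_one (Nat.dvd_one.mp hg)
    rw [padicValInt.eq_zero_of_not_dvd hnotdvd]
    omega

section PointLevel

variable {W : Affine ℚ}
  (ha1 : gd p 0 W.a₁) (ha2 : gd p 0 W.a₂) (ha3 : gd p 0 W.a₃) (ha4 : gd p 0 W.a₄)
  (ha6 : gd p 0 W.a₆)

/-- points that are 0 or have x-coordinate valuation ≤ -2k -/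
def SmallPt (p : ℕ) (k : ℤ) (Q : W.Point) : Prop :=
  Q = 0 ∨ (Q ≠ 0 ∧ padicValRat p (xcoord Q) ≤ -(2 * k))

lemma xcoord_some {x y : ℚ} (h : W.Nonsingular x y) : xcoord (Point.some _ _ h) = x := rfl

lemma xcoord_neg (Q : W.Point) : xcoord (-Q) = xcoord Q := by
  cases Q with
  | zero => rfl
  | some h => rfl

lemma smallpt_zero {k : ℤ} : SmallPt (W := W) p k 0 := Or.inl rfl

lemma smallpt_neg {k : ℤ} {Q : W.Point} (h : SmallPt p k Q) : SmallPt p k (-Q) := by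
  rcases h with h | ⟨h0, hv⟩
  · exact Or.inl (by rw [h, neg_zero])
  · exact Or.inr ⟨fun hc => h0 (by rwa [neg_eq_zero] at hc), by rwa [xcoord_neg]⟩

include ha1 ha2 ha3 ha4 ha6 in
lemma smallpt_add {k : ℤ} (hk : 1 ≤ k) {Q R : W.Point}
    (hQ : SmallPt p k Q) (hR : SmallPt p k R) : SmallPt p k (Q + R) := by
  rcases hQ with h | ⟨hQ0, hQv⟩
  · rwa [h, zero_add]
  rcases hR with h | ⟨hR0, hRv⟩
  · rw [h, add_zero]
    exact Or.inr ⟨hQ0, hQv⟩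
  cases Q with
  | zero => exact absurd rfl hQ0
  | @some x1 y1 h1 =>
    cases R with
    | zero => exact absurd rfl hR0
    | @some x2 y2 h2 =>
      by_cases hxy : x1 = x2 ∧ y1 = W.negY x2 y2
      · exact Or.inl (Point.add_of_Y_eq hxy.1 hxy.2)
      · have hxy' : x1 = x2 → y1 ≠ W.negY x2 y2 := fun hx hy => hxy ⟨hx, hy⟩
        rw [Point.add_some hxy]
        refine Or.inr ⟨Point.some_ne_zero _, ?_⟩
        rw [xcoord_some]
        exact addX_val ha1 ha2 ha3 ha4 ha6 hk h1.1 h2.1 hxy' hQv hRv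

variable (P : W.Point)

include ha1 ha2 ha3 ha4 ha6 in
/-- the multiples of `P` that are `k`-small form a subgroup of ℤ -/
lemma smallpt_subgroup {k : ℤ} (hk : 1 ≤ k) :
    ∃ H : AddSubgroup ℤ, ∀ n : ℤ, n ∈ H ↔ SmallPt p k (n • P) := by
  refine ⟨⟨⟨⟨{n : ℤ | SmallPt p k (n • P)}, ?_⟩, ?_⟩, ?_⟩, fun n => Iff.rfl⟩
  · intro a b ha hb
    simp only [Set.mem_setOf_eq, add_zsmul] at *
    exact smallpt_add ha1 ha2 ha3 ha4 ha6 hk ha hb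
  · simp only [Set.mem_setOf_eq, zero_zsmul]
    exact smallpt_zero
  · intro a ha
    simp only [Set.mem_setOf_eq, neg_zsmul] at *
    exact smallpt_neg ha


end PointLevel
end StrongDiv

open StrongDiv

theorem stmt7 (W : WeierstrassCurve ℚ)
    (hint : ∃ V : WeierstrassCurve ℤ, W = V.map (Int.castRingHom ℚ))
    (hΔ : W.Δ ≠ 0)
    (P : W.toAffine.Point)
    (hP : ∀ n : ℤ, n ≠ 0 → n • P ≠ 0)
    (e : ℤ → ℕ) (he0 : e 0 = 0)
    (he : ∀ n : ℤ, n ≠ 0 → 0 < e n ∧ (xcoord (n • P)).den = e n ^ 2) :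
    ∀ m n : ℤ, Nat.gcd (e m) (e n) = e (Int.gcd m n) := by
  obtain ⟨V, hV⟩ := hint
  -- integrality of the coefficients
  have ga : ∀ (p : ℕ) (_ : Fact p.Prime),
      gd p 0 W.toAffine.a₁ ∧ gd p 0 W.toAffine.a₂ ∧ gd p 0 W.toAffine.a₃ ∧
        gd p 0 W.toAffine.a₄ ∧ gd p 0 W.toAffine.a₆ := by
    intro p hp
    refine ⟨?_, ?_, ?_, ?_, ?_⟩ <;>
      · rw [hV]
        simpa using gd_int (p := p) _
  -- e is even
  have heneg : ∀ t : ℤ, e (-t) = e t := by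
    intro t
    by_cases ht : t = 0
    · rw [ht, neg_zero]
    · have h1 := he t ht
      have h2 := he (-t) (neg_ne_zero.mpr ht)
      have hden : (xcoord ((-t) • P)).den = (xcoord (t • P)).den := by
        rw [neg_zsmul, xcoord_neg]
      rw [h1.2, h2.2] at hden
      exact Nat.pow_left_injective (by norm_num) hden
  -- the valuation characterization
  have keyiff : ∀ (p : ℕ) (_ : Fact p.Prime) (n : ℤ) (_ : n ≠ 0) (k : ℤ) (_ : 1 ≤ k),
      ((k ≤ (padicValNat p (e n) : ℤ)) ↔ SmallPt p k (n • P)) := by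
    intro p hp n hn k hk
    have hne := hP n hn
    have h1 := he n hn
    have hden : (padicValNat p (xcoord (n • P)).den : ℤ) = 2 * padicValNat p (e n) := by
      rw [h1.2, padicValNat.pow _ _]
      push_cast; ring
    have hsmall : SmallPt p k (n • P) ↔ padicValRat p (xcoord (n • P)) ≤ -(2 * k) := by
      constructor
      · rintro (h | ⟨_, h⟩)
        · exact absurd h hne
        · exact h
      · intro h; exact Or.inr ⟨hne, h⟩
    rw [hsmall, den_val _ (by omega), hden]
    omega
  -- the per-prime min formula
  have perprime : ∀ (p : ℕ) (_ : Fact p.Prime) (m n : ℤ) (_ : m ≠ 0) (_ : n ≠ 0),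
      min (padicValNat p (e m)) (padicValNat p (e n)) = padicValNat p (e (Int.gcd m n)) := by
    intro p hp m n hm hn
    have hg0 : (Int.gcd m n : ℤ) ≠ 0 := by
      simp only [ne_eq, Int.natCast_eq_zero, Int.gcd_eq_zero_iff]
      exact fun h => hm h.1
    have prop : ∀ k : ℤ, 1 ≤ k →
        ((k ≤ (padicValNat p (e (Int.gcd m n)) : ℤ)) ↔
          (k ≤ (padicValNat p (e m) : ℤ) ∧ k ≤ (padicValNat p (e n) : ℤ))) := by
      intro k hk
      obtain ⟨H, hH⟩ := smallpt_subgroup (ga p hp).1 (ga p hp).2.1 (ga p hp).2.2.1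
        (ga p hp).2.2.2.1 (ga p hp).2.2.2.2 P hk
      rw [keyiff p hp _ hg0 k hk, keyiff p hp m hm k hk, keyiff p hp n hn k hk,
        ← hH, ← hH, ← hH]
      constructor
      · intro hgmem
        obtain ⟨cm, hcm⟩ := (Int.gcd_dvd_left m n : ((Int.gcd m n : ℤ)) ∣ m)
        obtain ⟨cn, hcn⟩ := (Int.gcd_dvd_right m n : ((Int.gcd m n : ℤ)) ∣ n)
        constructor
        · have := AddSubgroup.zsmul_mem H hgmem cm
          rwa [smul_eq_mul, mul_comm, ← hcm] at this
        · have := AddSubgroup.zsmul_mem H hgmem cn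
          rwa [smul_eq_mul, mul_comm, ← hcn] at this
      · rintro ⟨hmm, hnm⟩
        have hbez : (Int.gcd m n : ℤ) = m * Int.gcdA m n + n * Int.gcdB m n :=
          Int.gcd_eq_gcd_ab m n
        rw [hbez]
        refine AddSubgroup.add_mem H ?_ ?_
        · have := AddSubgroup.zsmul_mem H hmm (Int.gcdA m n)
          rwa [smul_eq_mul, mul_comm] at this
        · have := AddSubgroup.zsmul_mem H hnm (Int.gcdB m n)
          rwa [smul_eq_mul, mul_comm] at this
    -- arithmetic
    set A := padicValNat p (e m)
    set B := padicValNat p (e n)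
    set G := padicValNat p (e (Int.gcd m n))
    by_cases hG : 1 ≤ G
    · have h1 := (prop G (by exact_mod_cast hG)).mp (by omega)
      by_cases hAB : 1 ≤ min A B
      · have h2 := (prop (min A B) (by exact_mod_cast hAB)).mpr (by constructor <;> omega)
        omega
      · omega
    · by_cases hAB : 1 ≤ min A B
      · have h2 := (prop (min A B) (by exact_mod_cast hAB)).mpr (by constructor <;> omega)
        omega
      · omega
  -- final assembly
  intro m n
  by_cases hm : m = 0
  · subst hm
    rw [he0, Nat.gcd_zero_left, Int.gcd_zero_left]
    by_cases hn : n = 0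
    · subst hn; simp [he0]
    · rcases n.natAbs_eq with h | h
      · rw [← h]
      · rw [show ((n.natAbs : ℤ)) = -n by omega, heneg]
  · by_cases hn : n = 0
    · subst hn
      rw [he0, Nat.gcd_zero_right, Int.gcd_zero_right]
      rcases m.natAbs_eq with h | h
      · rw [← h]
      · rw [show ((m.natAbs : ℤ)) = -m by omega, heneg]
    · have hg0 : (Int.gcd m n : ℤ) ≠ 0 := by
        simp only [ne_eq, Int.natCast_eq_zero, Int.gcd_eq_zero_iff]
        exact fun h => hm h.1
      have hem := (he m hm).1
      have hen := (he n hn).1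
      have heg := (he _ hg0).1
      rw [Nat.eq_iff_prime_padicValNat_eq _ _ (Nat.gcd_ne_zero_left hem.ne') heg.ne']
      intro q hq
      haveI : Fact q.Prime := ⟨hq⟩
      have hfact : padicValNat q (Nat.gcd (e m) (e n)) =
          min (padicValNat q (e m)) (padicValNat q (e n)) := by
        have h1 := Nat.factorization_gcd hem.ne' hen.ne'
        have h2 := congrFun (congrArg (fun f => f.toFun) h1) q
        change _ = (Nat.factorization (e m) ⊓ Nat.factorization (e n)) q at h2
        rw [Finsupp.inf_apply] at h2
        rw [← Nat.factorization_def _ hq, ← Nat.factorization_def _ hq,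
          ← Nat.factorization_def _ hq]
        exact h2
      rw [hfact, perprime q this m n hm hn]
end

section
/- There is an absolute constant K > 0 such that for all distinct primes p₁ and p₂ and every real κ ≥ 2: ∑ p₁^{−a}·p₂^{−b} ≤ K·(log κ)/κ, where the sum is over all pairs of nonnegative integers (a, b) with p₁^a·p₂^b > κ. -/
/-!
For fixed `a`, the terms with `κ < p₁ ^ a * p₂ ^ b` form a tail of a geometric series of ratio
`1 / p₂ ≤ 1 / 2`, whose first term is below `min 1 (p₁ ^ a / κ)`; so the row sum is at most
`2 * min (p₁ ^ (-a)) (1 / κ)`. Summing over `a`, the at most `log₂ κ + 1` indices with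
`p₁ ^ a ≤ κ` contribute `1 / κ` each and the others a geometric tail of total at most `2 / κ`.
The sums are taken in `ℝ≥0∞`, where exchanging the order of summation is unconditional.
-/

open ENNReal

theorem ENNReal.tsum_ite_le_pow_le_two_mul_pow {x : ℝ≥0∞} (hx : x ≤ 2⁻¹) (n : ℕ) :
    ∑' b : ℕ, (if n ≤ b then x ^ b else 0) ≤ 2 * x ^ n := by
  rw [(HasSum.sum_range_add (f := fun b => if n ≤ b then x ^ b else 0) (k := n)
    ENNReal.summable.hasSum).tsum_eq]
  have hx1 : x ≤ 1 := hx.trans (by norm_num)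
  have hgeom : (1 - x)⁻¹ ≤ 2 := by
    rw [ENNReal.inv_le_iff_inv_le,
      ENNReal.le_sub_iff_add_le_left (ne_top_of_le_ne_top one_ne_top hx1) hx1]
    calc x + 2⁻¹ ≤ 2⁻¹ + 2⁻¹ := by gcongr
      _ = 1 := ENNReal.inv_two_add_inv_two
  simp only [le_add_iff_nonneg_left, zero_le, if_true, pow_add, ENNReal.tsum_mul_right,
    ENNReal.tsum_geometric]
  rw [Finset.sum_eq_zero fun i hi => if_neg (Finset.mem_range.mp hi).not_ge, zero_add]
  gcongr

theorem tsum_ite_lt_pow_ofReal_inv_le {p : ℝ} (hp : 2 ≤ p) {t : ℝ} (ht : 0 < t) :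
    ∑' b : ℕ, (if t < p ^ b then ENNReal.ofReal (p ^ b)⁻¹ else 0) ≤
      2 * ENNReal.ofReal (min 1 t⁻¹) := by
  have hp1 : 1 < p := by linarith
  have hex : ∃ n : ℕ, t < p ^ n := pow_unbounded_of_one_lt t hp1
  set n := Nat.find hex
  have hlt_iff : ∀ b, t < p ^ b ↔ n ≤ b := fun b =>
    ⟨fun h => Nat.find_min' hex h,
      fun h => (Nat.find_spec hex).trans_le (pow_le_pow_right₀ hp1.le h)⟩
  have hpow : ∀ b : ℕ, ENNReal.ofReal (p ^ b)⁻¹ = ENNReal.ofReal p⁻¹ ^ b := fun b => by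
    rw [← ENNReal.ofReal_pow (by positivity), inv_pow]
  have hhalf : ENNReal.ofReal p⁻¹ ≤ 2⁻¹ := by
    rw [← ENNReal.ofReal_ofNat 2, ← ENNReal.ofReal_inv_of_pos two_pos]
    exact ENNReal.ofReal_le_ofReal (inv_anti₀ two_pos hp)
  simp_rw [hlt_iff, hpow]
  refine (ENNReal.tsum_ite_le_pow_le_two_mul_pow hhalf n).trans ?_
  rw [← hpow]
  gcongr
  exact le_min (inv_le_one_of_one_le₀ (one_le_pow₀ hp1.le))
    (inv_anti₀ ht (Nat.find_spec hex).le)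

theorem tsum_ite_pow_le_le {p : ℝ} (hp : 2 ≤ p) {κ : ℝ} (hκ : 1 ≤ κ) (c : ℝ≥0∞) :
    ∑' a : ℕ, (if p ^ a ≤ κ then c else 0) ≤ ENNReal.ofReal (Real.logb 2 κ + 1) * c := by
  set N := ⌊Real.logb 2 κ⌋₊ + 1
  have hlt : ∀ a : ℕ, p ^ a ≤ κ → a < N := fun a ha => by
    have h2a : (2 : ℝ) ^ (a : ℝ) ≤ κ := by
      rw [Real.rpow_natCast]; exact (pow_le_pow_left₀ zero_le_two hp a).trans ha
    exact Nat.lt_succ_of_le (Nat.le_floor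
      ((Real.le_logb_iff_rpow_le one_lt_two (by linarith)).mpr h2a))
  calc ∑' a : ℕ, (if p ^ a ≤ κ then c else 0)
      ≤ ∑' a : ℕ, (if a ∈ Finset.range N then c else 0) := by
        refine ENNReal.tsum_le_tsum fun a => ?_
        split_ifs with h h'
        exacts [le_rfl, absurd (Finset.mem_range.mpr (hlt a h)) h', zero_le, le_rfl]
    _ = N * c := by
        rw [tsum_eq_sum (s := Finset.range N) fun a ha => if_neg ha, Finset.sum_ite_mem,
          Finset.inter_self, Finset.sum_const, Finset.card_range, nsmul_eq_mul]
    _ ≤ ENNReal.ofReal (Real.logb 2 κ + 1) * c := by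
        gcongr
        rw [← ENNReal.ofReal_natCast]
        apply ENNReal.ofReal_le_ofReal
        simp only [N, Nat.cast_add, Nat.cast_one]
        linarith [Nat.floor_le (Real.logb_nonneg one_lt_two hκ)]

theorem tsum_ofReal_min_inv_pow_inv_le {p : ℝ} (hp : 2 ≤ p) {κ : ℝ} (hκ : 1 ≤ κ) :
    ∑' a : ℕ, ENNReal.ofReal (min (p ^ a)⁻¹ κ⁻¹) ≤
      ENNReal.ofReal ((Real.logb 2 κ + 3) / κ) := by
  have hκ0 : 0 < κ := by linarith
  have hsplit : ∀ a : ℕ, ENNReal.ofReal (min (p ^ a)⁻¹ κ⁻¹) ≤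
      (if p ^ a ≤ κ then ENNReal.ofReal κ⁻¹ else 0) +
        (if κ < p ^ a then ENNReal.ofReal (p ^ a)⁻¹ else 0) := fun a => by
    rcases le_or_gt (p ^ a) κ with h | h
    · simp [h, h.not_gt]
    · simp [h, h.not_ge]
  calc ∑' a : ℕ, ENNReal.ofReal (min (p ^ a)⁻¹ κ⁻¹)
      ≤ ENNReal.ofReal (Real.logb 2 κ + 1) * ENNReal.ofReal κ⁻¹ +
          2 * ENNReal.ofReal (min 1 κ⁻¹) := by
        refine (ENNReal.tsum_le_tsum hsplit).trans ?_
        rw [ENNReal.tsum_add]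
        gcongr
        exacts [tsum_ite_pow_le_le hp hκ _, tsum_ite_lt_pow_ofReal_inv_le hp hκ0]
    _ ≤ ENNReal.ofReal (Real.logb 2 κ + 1) * ENNReal.ofReal κ⁻¹ +
          ENNReal.ofReal 2 * ENNReal.ofReal κ⁻¹ := by
        rw [ENNReal.ofReal_ofNat]
        gcongr
        exact min_le_right _ _
    _ = ENNReal.ofReal ((Real.logb 2 κ + 3) / κ) := by
        have hL : 0 ≤ Real.logb 2 κ := Real.logb_nonneg one_lt_two hκ
        rw [← add_mul, ← ENNReal.ofReal_add (by positivity) zero_le_two,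
          ← ENNReal.ofReal_mul (by positivity)]
        ring_nf

theorem tsum_ite_lt_mul_pow_ofReal_inv_le {p q : ℝ} (hp : 2 ≤ p) (hq : 2 ≤ q) {κ : ℝ}
    (hκ : 1 ≤ κ) :
    ∑' ab : ℕ × ℕ, (if κ < p ^ ab.1 * q ^ ab.2
      then ENNReal.ofReal (p ^ ab.1 * q ^ ab.2)⁻¹ else 0) ≤
      ENNReal.ofReal (2 * (Real.logb 2 κ + 3) / κ) := by
  have hκ0 : 0 < κ := by linarith
  have hrow : ∀ a : ℕ, ∑' b : ℕ, (if κ < p ^ a * q ^ b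
      then ENNReal.ofReal (p ^ a * q ^ b)⁻¹ else 0) ≤
      2 * ENNReal.ofReal (min (p ^ a)⁻¹ κ⁻¹) := fun a => by
    have hpa : 0 < p ^ a := by positivity
    have hfactor : ∀ b : ℕ, (if κ < p ^ a * q ^ b
        then ENNReal.ofReal (p ^ a * q ^ b)⁻¹ else 0) = ENNReal.ofReal (p ^ a)⁻¹ *
          (if κ / p ^ a < q ^ b then ENNReal.ofReal (q ^ b)⁻¹ else 0) := fun b => by
      simp only [div_lt_iff₀' hpa, mul_inv, ENNReal.ofReal_mul (inv_nonneg.mpr hpa.le), mul_ite,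
        mul_zero]
    calc ∑' b : ℕ, (if κ < p ^ a * q ^ b then ENNReal.ofReal (p ^ a * q ^ b)⁻¹ else 0)
        = ENNReal.ofReal (p ^ a)⁻¹ *
            ∑' b : ℕ, (if κ / p ^ a < q ^ b then ENNReal.ofReal (q ^ b)⁻¹ else 0) := by
          simp_rw [hfactor, ENNReal.tsum_mul_left]
      _ ≤ ENNReal.ofReal (p ^ a)⁻¹ * (2 * ENNReal.ofReal (min 1 (κ / p ^ a)⁻¹)) := by
          gcongr
          exact tsum_ite_lt_pow_ofReal_inv_le hq (by positivity)
      _ = 2 * ENNReal.ofReal (min (p ^ a)⁻¹ κ⁻¹) := by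
          rw [mul_left_comm, ← ENNReal.ofReal_mul (by positivity),
            mul_min_of_nonneg _ _ (by positivity), inv_div, mul_one]
          congr 3
          field_simp
  calc _ = ∑' a : ℕ, ∑' b : ℕ, (if κ < p ^ a * q ^ b
        then ENNReal.ofReal (p ^ a * q ^ b)⁻¹ else 0) := ENNReal.tsum_prod'
    _ ≤ ∑' a : ℕ, 2 * ENNReal.ofReal (min (p ^ a)⁻¹ κ⁻¹) := ENNReal.tsum_le_tsum hrow
    _ ≤ ENNReal.ofReal 2 * ENNReal.ofReal ((Real.logb 2 κ + 3) / κ) := by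
        rw [ENNReal.tsum_mul_left, ENNReal.ofReal_ofNat]
        gcongr
        exact tsum_ofReal_min_inv_pow_inv_le hp hκ
    _ = ENNReal.ofReal (2 * (Real.logb 2 κ + 3) / κ) := by
        rw [← ENNReal.ofReal_mul zero_le_two, mul_div_assoc]

theorem tsum_inv_mul_pow_of_lt_le {p q : ℝ} (hp : 2 ≤ p) (hq : 2 ≤ q) {κ : ℝ} (hκ : 1 ≤ κ) :
    ∑' ab : {ab : ℕ × ℕ // κ < p ^ ab.1 * q ^ ab.2}, (p ^ ab.1.1 * q ^ ab.1.2)⁻¹ ≤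
      2 * (Real.logb 2 κ + 3) / κ := by
  have hL : 0 ≤ Real.logb 2 κ := Real.logb_nonneg one_lt_two hκ
  have hsub := tsum_subtype {ab : ℕ × ℕ | κ < p ^ ab.1 * q ^ ab.2}
    fun ab => ENNReal.ofReal (p ^ ab.1 * q ^ ab.2)⁻¹
  simp only [Set.indicator_apply, Set.mem_ofPred_eq] at hsub
  calc ∑' ab : {ab : ℕ × ℕ // κ < p ^ ab.1 * q ^ ab.2}, (p ^ ab.1.1 * q ^ ab.1.2)⁻¹
      = (∑' ab : {ab : ℕ × ℕ // κ < p ^ ab.1 * q ^ ab.2},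
          ENNReal.ofReal (p ^ ab.1.1 * q ^ ab.1.2)⁻¹).toReal := by
        rw [ENNReal.tsum_toReal_eq fun _ => ENNReal.ofReal_ne_top]
        refine tsum_congr fun ab => (ENNReal.toReal_ofReal ?_).symm
        have := lt_of_lt_of_le zero_lt_one (hκ.trans ab.2.le)
        positivity
    _ ≤ (ENNReal.ofReal (2 * (Real.logb 2 κ + 3) / κ)).toReal := by
        exact ENNReal.toReal_mono ENNReal.ofReal_ne_top
          (hsub.trans_le (tsum_ite_lt_mul_pow_ofReal_inv_le hp hq hκ))
    _ = 2 * (Real.logb 2 κ + 3) / κ := ENNReal.toReal_ofReal (by positivity)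

theorem stmt14 :
    ∃ K > (0 : ℝ), ∀ p₁ p₂ : ℕ, p₁.Prime → p₂.Prime → p₁ ≠ p₂ →
      ∀ κ : ℝ, 2 ≤ κ →
      (∑' ab : {ab : ℕ × ℕ // κ < (p₁ : ℝ) ^ ab.1 * (p₂ : ℝ) ^ ab.2},
          ((p₁ : ℝ) ^ (ab : ℕ × ℕ).1 * (p₂ : ℝ) ^ (ab : ℕ × ℕ).2)⁻¹) ≤
        K * Real.log κ / κ := by
  refine ⟨8 / Real.log 2, by positivity, fun p₁ p₂ hp₁ hp₂ _ κ hκ => ?_⟩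
  have hbound := tsum_inv_mul_pow_of_lt_le (p := p₁) (q := p₂) (mod_cast hp₁.two_le)
    (mod_cast hp₂.two_le) (one_le_two.trans hκ)
  refine hbound.trans ?_
  have hL : 1 ≤ Real.logb 2 κ := (Real.le_logb_iff_rpow_le one_lt_two (by linarith)).mpr (by simpa)
  calc 2 * (Real.logb 2 κ + 3) / κ ≤ 8 * Real.logb 2 κ / κ := by
        gcongr ?_ / _; linarith
    _ = 8 / Real.log 2 * Real.log κ / κ := by rw [Real.logb]; ring
end

section
/- Let N be a positive integer all of whose prime factors are congruent to 1 modulo 8. Then for every pair of rational numbers (x, y) satisfying y² = x(x² + N) with x ≠ 0, there exist rational numbers u, v with x = u² − 2v². (Equivalently, the conic t₀² − 2t₁² = x·t₂² over ℚ has a nontrivial rational point for every rational point (x, y) on the elliptic curve y² = x(x² + N) with x ≠ 0.) -/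
set_option maxHeartbeats 1000000

/-- A prime `p ≡ 1 (mod 8)` is of the form `a² - 2b²`. -/
lemma rep_prime (p : ℕ) (hp : p.Prime) (h8 : p % 8 = 1) :
    ∃ a b : ℤ, (p : ℤ) = a ^ 2 - 2 * b ^ 2 := by
  haveI : Fact p.Prime := ⟨hp⟩
  haveI : NeZero p := ⟨hp.pos.ne'⟩
  have hp2 : p ≠ 2 := by rintro rfl; norm_num at h8
  obtain ⟨c, hc⟩ := (ZMod.exists_sq_eq_two_iff hp2).mpr (Or.inl h8)
  have hrlt : p.sqrt * p.sqrt < p := by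
    rcases lt_or_eq_of_le (Nat.sqrt_le p) with h | h
    · exact h
    · exfalso
      rcases hp.eq_one_or_self_of_dvd p.sqrt ⟨p.sqrt, h.symm⟩ with h1 | h1
      · rw [h1] at h; simp at h; exact hp.one_lt.ne' h.symm
      · rw [h1] at h; nlinarith [hp.two_le]
  -- pigeonhole
  have hcard : (Finset.univ : Finset (ZMod p)).card
      < ((Finset.range (p.sqrt + 1)) ×ˢ (Finset.range (p.sqrt + 1))).card := by
    rw [Finset.card_univ, Finset.card_product, Finset.card_range, ZMod.card]
    simpa [Nat.succ_eq_add_one] using Nat.lt_succ_sqrt p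
  obtain ⟨⟨a1, b1⟩, hmem1, ⟨a2, b2⟩, hmem2, hne, heq⟩ :=
    Finset.exists_ne_map_eq_of_card_lt_of_maps_to hcard
      (f := fun ab : ℕ × ℕ => (ab.1 : ZMod p) - c * ab.2)
      (fun a _ => Finset.mem_univ _)
  simp only [Finset.mem_product, Finset.mem_range] at hmem1 hmem2
  set u : ℤ := (a1 : ℤ) - a2 with hu
  set v : ℤ := (b1 : ℤ) - b2 with hv
  have huv : ¬ (u = 0 ∧ v = 0) := by
    rintro ⟨h1, h2⟩
    apply hne
    have ha : a1 = a2 := by omega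
    have hb : b1 = b2 := by omega
    simp [ha, hb]
  have hUZ : ((u : ZMod p)) = c * (v : ZMod p) := by
    have h1 : (a1 : ZMod p) - c * b1 = (a2 : ZMod p) - c * b2 := heq
    push_cast [hu, hv]
    linear_combination h1
  have hdvd : (p : ℤ) ∣ u ^ 2 - 2 * v ^ 2 := by
    rw [← ZMod.intCast_zmod_eq_zero_iff_dvd]
    push_cast
    rw [hUZ, show ((2:ZMod p)) = c * c from hc]
    ring
  have ha1r : (a1 : ℤ) ≤ p.sqrt := by exact_mod_cast Nat.lt_succ_iff.mp hmem1.1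
  have ha2r : (a2 : ℤ) ≤ p.sqrt := by exact_mod_cast Nat.lt_succ_iff.mp hmem2.1
  have hb1r : (b1 : ℤ) ≤ p.sqrt := by exact_mod_cast Nat.lt_succ_iff.mp hmem1.2
  have hb2r : (b2 : ℤ) ≤ p.sqrt := by exact_mod_cast Nat.lt_succ_iff.mp hmem2.2
  have ha10 : (0:ℤ) ≤ a1 := Int.natCast_nonneg a1
  have ha20 : (0:ℤ) ≤ a2 := Int.natCast_nonneg a2
  have hb10 : (0:ℤ) ≤ b1 := Int.natCast_nonneg b1
  have hb20 : (0:ℤ) ≤ b2 := Int.natCast_nonneg b2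
  have hub : u ^ 2 ≤ ((p.sqrt : ℤ)) ^ 2 := sq_le_sq' (by omega) (by omega)
  have hvb : v ^ 2 ≤ ((p.sqrt : ℤ)) ^ 2 := sq_le_sq' (by omega) (by omega)
  have hrp : ((p.sqrt : ℤ)) ^ 2 < p := by
    have : ((p.sqrt * p.sqrt : ℕ) : ℤ) < ((p : ℕ) : ℤ) := by exact_mod_cast hrlt
    push_cast at this
    nlinarith [this]
  have hppos : (0:ℤ) < p := by exact_mod_cast hp.pos
  obtain ⟨k, hk⟩ := hdvd
  have hk01 : k = 0 ∨ k = -1 := by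
    have h1 : (p:ℤ) * k < p := by
      rw [← hk]; have := sq_nonneg v; linarith
    have h2 : -(2 * (p:ℤ)) < p * k := by
      rw [← hk]; have := sq_nonneg u; linarith
    have hklt : k < 1 := lt_of_mul_lt_mul_left (by linarith) hppos.le
    have hkgt : (-2:ℤ) < k := lt_of_mul_lt_mul_left (by linarith) hppos.le
    omega
  rcases hk01 with rfl | rfl
  · -- u² = 2 v² : impossible by irrationality of √2
    exfalso
    rw [mul_zero, sub_eq_zero] at hk
    have hv0 : v ≠ 0 := by
      intro h
      exact huv ⟨by nlinarith [hk, h], h⟩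
    have hvq : ((v:ℚ)) ≠ 0 := by exact_mod_cast hv0
    have hq : ((u:ℚ) / v) ^ 2 = 2 := by
      field_simp
      exact_mod_cast hk.trans (mul_comm _ _)
    apply irrational_sqrt_two
    refine ⟨|((u:ℚ)) / v|, ?_⟩
    have h2 : ((|((u:ℚ)) / v| : ℚ) : ℝ) ^ 2 = 2 := by
      push_cast
      rw [sq_abs]
      exact_mod_cast hq
    rw [show (2:ℝ) = (((|((u:ℚ)) / v| : ℚ)) : ℝ) ^ 2 from h2.symm]
    rw [Real.sqrt_sq (by positivity)]
  · refine ⟨u + 2 * v, u + v, ?_⟩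
    have h3 : u ^ 2 - 2 * v ^ 2 = -(p:ℤ) := by rw [hk]; ring
    linear_combination h3

/-- Closure under multiplication. -/
lemma rep_nat : ∀ n : ℕ, n ≠ 0 →
    (∀ p : ℕ, p.Prime → p ∣ n → ∃ a b : ℤ, (p : ℤ) = a ^ 2 - 2 * b ^ 2) →
    ∃ a b : ℤ, (n : ℤ) = a ^ 2 - 2 * b ^ 2 := by
  intro n
  induction n using Nat.strong_induction_on with
  | _ n ih =>
    intro hn h
    rcases eq_or_ne n 1 with rfl | h1
    · exact ⟨1, 0, by norm_num⟩
    · have hpf := Nat.minFac_prime h1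
      obtain ⟨m, hm⟩ := Nat.minFac_dvd n
      have hm0 : m ≠ 0 := by rintro rfl; rw [mul_zero] at hm; exact hn hm
      have hmlt : m < n := by
        rw [hm]
        calc m = 1 * m := (one_mul m).symm
        _ < n.minFac * m := (Nat.mul_lt_mul_right (Nat.pos_of_ne_zero hm0)).mpr hpf.one_lt
      obtain ⟨a, b, hab⟩ := h n.minFac hpf (Nat.minFac_dvd n)
      obtain ⟨c, d, hcd⟩ := ih m hmlt hm0
        (fun q hq hqd => h q hq (hm ▸ hqd.mul_left n.minFac))
      refine ⟨a * c + 2 * b * d, a * d + b * c, ?_⟩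
      have hcast : (n : ℤ) = (n.minFac : ℤ) * m := by exact_mod_cast congrArg (Nat.cast) hm
      rw [hcast, hab, hcd]; ring

theorem stmt15 (N : ℕ) (hN : 0 < N)
    (hprime : ∀ p : ℕ, p.Prime → p ∣ N → p % 8 = 1) :
    ∀ x y : ℚ, y ^ 2 = x * (x ^ 2 + N) → x ≠ 0 →
      ∃ u v : ℚ, x = u ^ 2 - 2 * v ^ 2 := by
  intro x y hxy hx
  have hNQ : (0:ℚ) < N := by exact_mod_cast hN
  have hx2N : (0:ℚ) < x ^ 2 + N := by positivity
  have hy : y ≠ 0 := by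
    intro h
    rw [h] at hxy
    rcases mul_eq_zero.mp hxy.symm with h1 | h1
    · exact hx h1
    · exact hx2N.ne' h1
  have hxpos : 0 < x := by
    have h0 : 0 < x * (x ^ 2 + N) := by
      rw [← hxy]; positivity
    by_contra hx'
    push_neg at hx'
    nlinarith [h0, hx2N]
  set n : ℤ := x.num with hn
  set d : ℕ := x.den with hd
  have hnpos : 0 < n := Rat.num_pos.mpr hxpos
  have hdpos : 0 < d := x.pos
  have hdQ : ((d:ℚ)) ≠ 0 := by positivity
  have hx_eq : x = (n : ℚ) / d := (Rat.num_div_den x).symm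
  set t : ℚ := y * (d:ℚ) ^ 2 with ht
  have ht2 : t ^ 2 = ((n * (n ^ 2 + N * d ^ 2) * d : ℤ) : ℚ) := by
    have h1 : t ^ 2 = (x * (x ^ 2 + N)) * (d:ℚ) ^ 4 := by rw [ht, ← hxy]; ring
    rw [h1, hx_eq]
    field_simp
    push_cast
    ring
  have hden : t.den = 1 := by
    have h2 : (t ^ 2).den = 1 := by rw [ht2]; exact Rat.den_intCast _
    rw [Rat.den_pow] at h2
    exact (pow_eq_one_iff.mp h2).resolve_right two_ne_zero
  set T : ℤ := t.num with hT
  have hTt : (T : ℚ) = t := by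
    rw [hT, ← Rat.num_div_den t, hden]; simp
  have hTeq : T ^ 2 = n * (n ^ 2 + N * d ^ 2) * d := by
    have h3 : ((T:ℚ)) ^ 2 = ((n * (n ^ 2 + N * d ^ 2) * d : ℤ) : ℚ) := by
      rw [hTt]; exact ht2
    exact_mod_cast h3
  set n' : ℕ := n.natAbs with hn'
  have hnn' : (n' : ℤ) = n := Int.natAbs_of_nonneg hnpos.le
  set K : ℕ := n' ^ 2 + N * d ^ 2 with hK
  set T' : ℕ := T.natAbs with hT'
  have hTK : T' ^ 2 = n' * K * d := by
    have h4 : ((T' ^ 2 : ℕ) : ℤ) = ((n' * K * d : ℕ) : ℤ) := by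
      push_cast [hT', hK]
      rw [sq_abs, hnn']
      linarith [hTeq]
    exact_mod_cast h4
  have hn'0 : n' ≠ 0 := by positivity
  have hd0 : d ≠ 0 := hdpos.ne'
  have hK0 : K ≠ 0 := by positivity
  have hcop : n'.Coprime d := x.reduced
  have hparity : ∀ p : ℕ, p.Prime → ¬ p ∣ N → Even ((n' * d).factorization p) := by
    intro p hp hpN
    have hfac : n'.factorization p + K.factorization p + d.factorization p
        = 2 * T'.factorization p := by
      have h := congrArg Nat.factorization hTK
      rw [Nat.factorization_pow, Nat.factorization_mul (mul_ne_zero hn'0 hK0) hd0,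
        Nat.factorization_mul hn'0 hK0] at h
      have h2 := DFunLike.congr_fun h p
      simpa using h2.symm
    have hfnd : (n' * d).factorization p = n'.factorization p + d.factorization p := by
      rw [Nat.factorization_mul hn'0 hd0]; simp
    by_cases hpn : p ∣ n'
    · have hpd : ¬ p ∣ d := by
        intro hpd
        have hg : p ∣ Nat.gcd n' d := Nat.dvd_gcd hpn hpd
        rw [hcop] at hg
        exact hp.one_lt.ne' (Nat.dvd_one.mp hg)
      have hpK : ¬ p ∣ K := by
        intro hpK
        have h1 : p ∣ n' ^ 2 := dvd_pow hpn two_ne_zero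
        have h2 : p ∣ N * d ^ 2 := by
          have h5 := Nat.dvd_sub hpK h1
          rwa [hK, Nat.add_sub_cancel_left] at h5
        rcases hp.dvd_mul.mp h2 with h3 | h3
        · exact hpN h3
        · exact hpd (hp.dvd_of_dvd_pow h3)
      rw [hfnd, Nat.factorization_eq_zero_of_not_dvd hpd]
      rw [Nat.factorization_eq_zero_of_not_dvd hpK,
        Nat.factorization_eq_zero_of_not_dvd hpd] at hfac
      exact ⟨T'.factorization p, by omega⟩
    · rw [hfnd, Nat.factorization_eq_zero_of_not_dvd hpn]
      by_cases hpd : p ∣ d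
      · have hpK : ¬ p ∣ K := by
          intro hpK
          have h1 : p ∣ N * d ^ 2 := (dvd_pow hpd two_ne_zero).mul_left N
          have h2 : p ∣ n' ^ 2 := by
            have h5 := Nat.dvd_sub hpK h1
            rwa [hK, Nat.add_sub_cancel] at h5
          exact hpn (hp.dvd_of_dvd_pow h2)
        rw [Nat.factorization_eq_zero_of_not_dvd hpn,
          Nat.factorization_eq_zero_of_not_dvd hpK] at hfac
        exact ⟨T'.factorization p, by omega⟩
      · rw [Nat.factorization_eq_zero_of_not_dvd hpd]
        exact ⟨0, by omega⟩
  obtain ⟨m, s, hms, hsf⟩ := Nat.sq_mul_squarefree (n' * d)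
  have hnd0 : n' * d ≠ 0 := mul_ne_zero hn'0 hd0
  have hm0 : m ≠ 0 := by rintro rfl; rw [mul_zero] at hms; exact hnd0 hms.symm
  have hs0 : s ≠ 0 := by
    rintro rfl
    rw [show (0:ℕ) ^ 2 * m = 0 by ring] at hms
    exact hnd0 hms.symm
  have hmrep : ∀ p : ℕ, p.Prime → p ∣ m → ∃ a b : ℤ, (p : ℤ) = a ^ 2 - 2 * b ^ 2 := by
    intro p hp hpm
    have hodd : ¬ Even ((n' * d).factorization p) := by
      rw [← hms, Nat.factorization_mul (pow_ne_zero 2 hs0) hm0, Nat.factorization_pow]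
      have h1 : m.factorization p = 1 := by
        have hle := hsf.natFactorization_le_one p
        have hge := hp.factorization_pos_of_dvd hm0 hpm
        omega
      simp [h1, Nat.even_add_one, parity_simps]
    apply rep_prime p hp
    apply hprime p hp
    by_contra hpN
    exact hodd (hparity p hp hpN)
  obtain ⟨a, b, hab⟩ := rep_nat m hm0 hmrep
  refine ⟨(a : ℚ) * s / d, (b : ℚ) * s / d, ?_⟩
  have habQ : ((m : ℚ)) = (a : ℚ) ^ 2 - 2 * (b : ℚ) ^ 2 := by exact_mod_cast hab
  have hmsQ : ((s : ℚ)) ^ 2 * m = (n' : ℚ) * d := by exact_mod_cast hms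
  have hnQ : ((n' : ℚ)) = (n : ℚ) := by exact_mod_cast hnn'
  have key : ((a:ℚ) * s) ^ 2 - 2 * ((b:ℚ) * s) ^ 2 = (n:ℚ) * d := by
    have h6 : ((a:ℚ) * s) ^ 2 - 2 * ((b:ℚ) * s) ^ 2 = ((a:ℚ) ^ 2 - 2 * (b:ℚ) ^ 2) * s ^ 2 := by
      ring
    rw [h6, ← habQ]
    linear_combination hmsQ + (d:ℚ) * hnQ
  rw [hx_eq]
  field_simp
  linear_combination -key
end

section
/- The curve 2w² = z⁴ − 10081 violates the Hasse principle: there exist real numbers w, z with 2w² = z⁴ − 10081; for every prime p there exist p-adic numbers w, z ∈ ℚ_p with 2w² = z⁴ − 10081; yet there is no pair of rational numbers (w, z) with 2w² = z⁴ − 10081. -/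
open Polynomial

lemma two_ne_zero_zmod {p : ℕ} [Fact p.Prime] (hp2 : p ≠ 2) : (2 : ZMod p) ≠ 0 := by
  intro h
  have : ((2:ℕ) : ZMod p) = 0 := by exact_mod_cast h
  rw [ZMod.natCast_eq_zero_iff] at this
  exact hp2 ((Nat.prime_dvd_prime_iff_eq (Fact.out) Nat.prime_two).1 this)

lemma padic_sqrt {p : ℕ} [Fact p.Prime] (hp2 : p ≠ 2) (c r : ℤ)
    (h1 : ((r^2 - c : ℤ) : ZMod p) = 0) (h2 : ((r : ℤ) : ZMod p) ≠ 0) :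
    ∃ w : ℚ_[p], w^2 = (c : ℚ_[p]) := by
  set F : Polynomial ℤ_[p] := X^2 - C (c : ℤ_[p]) with hF
  have hFa : F.eval (r : ℤ_[p]) = ((r^2 - c : ℤ) : ℤ_[p]) := by
    simp [hF]; try push_cast; try ring
  have hF'a : (derivative F).eval (r : ℤ_[p]) = ((2*r : ℤ) : ℤ_[p]) := by
    simp [hF]; try push_cast; try ring; simp
  have hdvd : (p:ℤ) ∣ r^2 - c := (ZMod.intCast_zmod_eq_zero_iff_dvd _ _).1 h1
  have hnd : ¬ (p:ℤ) ∣ 2*r := by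
    intro h
    have h0 : ((2*r : ℤ) : ZMod p) = 0 := (ZMod.intCast_zmod_eq_zero_iff_dvd _ _).2 h
    push_cast at h0
    rcases mul_eq_zero.1 h0 with h'|h'
    · exact two_ne_zero_zmod hp2 h'
    · exact h2 h'
  have hnorm1 : ‖(derivative F).eval (r : ℤ_[p])‖ = 1 := by
    rw [hF'a]
    refine le_antisymm (PadicInt.norm_le_one _) ?_
    by_contra hlt
    push_neg at hlt
    exact hnd ((PadicInt.norm_int_lt_one_iff_dvd _).1 hlt)
  have hlt : ‖F.eval (r : ℤ_[p])‖ < ‖(derivative F).eval (r : ℤ_[p])‖^2 := by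
    rw [hnorm1, hFa, one_pow]
    exact (PadicInt.norm_int_lt_one_iff_dvd _).2 hdvd
  obtain ⟨z, hz, -⟩ := hensels_lemma hlt
  have hz2 : z^2 = (c : ℤ_[p]) := by
    have := hz
    simp [hF] at this
    linear_combination this
  refine ⟨(z : ℚ_[p]), ?_⟩
  have := congrArg (fun x : ℤ_[p] => (x : ℚ_[p])) hz2
  push_cast at this
  exact this

lemma padic_quartic {p : ℕ} [Fact p.Prime] (hp2 : p ≠ 2) (c r : ℤ)
    (h1 : ((r^4 - c : ℤ) : ZMod p) = 0) (h2 : ((r : ℤ) : ZMod p) ≠ 0) :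
    ∃ w : ℚ_[p], w^4 = (c : ℚ_[p]) := by
  set F : Polynomial ℤ_[p] := X^4 - C (c : ℤ_[p]) with hF
  have hFa : F.eval (r : ℤ_[p]) = ((r^4 - c : ℤ) : ℤ_[p]) := by
    simp [hF]; try push_cast; try ring
  have hF'a : (derivative F).eval (r : ℤ_[p]) = ((4*r^3 : ℤ) : ℤ_[p]) := by
    simp [hF]; try push_cast; try ring; simp
  have hdvd : (p:ℤ) ∣ r^4 - c := (ZMod.intCast_zmod_eq_zero_iff_dvd _ _).1 h1
  have hnd : ¬ (p:ℤ) ∣ 4*r^3 := by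
    intro h
    have h0 : ((4*r^3 : ℤ) : ZMod p) = 0 := (ZMod.intCast_zmod_eq_zero_iff_dvd _ _).2 h
    push_cast at h0
    have h4 : (4 : ZMod p) ≠ 0 := by
      intro h4
      have : (2:ZMod p) * 2 = 0 := by norm_num; exact_mod_cast h4
      rcases mul_eq_zero.1 this with h'|h' <;> exact two_ne_zero_zmod hp2 h'
    rcases mul_eq_zero.1 h0 with h'|h'
    · exact h4 h'
    · exact h2 (pow_eq_zero_iff (by norm_num) |>.1 h')
  have hnorm1 : ‖(derivative F).eval (r : ℤ_[p])‖ = 1 := by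
    rw [hF'a]
    refine le_antisymm (PadicInt.norm_le_one _) ?_
    by_contra hlt
    push_neg at hlt
    exact hnd ((PadicInt.norm_int_lt_one_iff_dvd _).1 hlt)
  have hlt : ‖F.eval (r : ℤ_[p])‖ < ‖(derivative F).eval (r : ℤ_[p])‖^2 := by
    rw [hnorm1, hFa, one_pow]
    exact (PadicInt.norm_int_lt_one_iff_dvd _).2 hdvd
  obtain ⟨z, hz, -⟩ := hensels_lemma hlt
  have hz2 : z^4 = (c : ℤ_[p]) := by
    simp [hF] at hz
    linear_combination hz
  refine ⟨(z : ℚ_[p]), ?_⟩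
  have := congrArg (fun x : ℤ_[p] => (x : ℚ_[p])) hz2
  push_cast at this
  exact this

lemma padic_sqrt_neg15 : ∃ w : ℚ_[2], w^2 = (-15 : ℚ_[2]) := by
  set F : Polynomial ℤ_[2] := X^2 - C (-15 : ℤ_[2]) with hF
  have hFa : F.eval (1 : ℤ_[2]) = (2:ℤ_[2])^4 := by
    simp [hF]; norm_num
  have hF'a : (derivative F).eval (1 : ℤ_[2]) = (2:ℤ_[2]) := by
    simp [hF]; norm_num
  have hlt : ‖F.eval (1 : ℤ_[2])‖ < ‖(derivative F).eval (1 : ℤ_[2])‖^2 := by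
    rw [hFa, hF'a]
    have h2 : ‖(2:ℤ_[2])‖ = (1:ℝ)/2 := by
      have : ((2:ℕ) : ℤ_[2]) = (2:ℤ_[2]) := by norm_num
      rw [← this, PadicInt.norm_p]
      norm_num
    rw [norm_pow, h2]
    norm_num
  obtain ⟨z, hz, -⟩ := hensels_lemma hlt
  have hz2 : z^2 = (-15 : ℤ_[2]) := by
    simp [hF] at hz
    linear_combination hz
  refine ⟨(z : ℚ_[2]), ?_⟩
  have := congrArg (fun x : ℤ_[2] => (x : ℚ_[2])) hz2
  push_cast at this
  exact this


-- product of two nonsquares in ZMod p is a square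
lemma nsq_mul {p : ℕ} [Fact p.Prime] (hp2 : p ≠ 2) {u v : ZMod p}
    (hu : ¬ IsSquare u) (hv : ¬ IsSquare v) : IsSquare (u * v) := by
  have hchar : ringChar (ZMod p) ≠ 2 := by
    rw [ZMod.ringChar_zmod_n]; exact hp2
  have hu0 : u ≠ 0 := fun h => hu (h ▸ ⟨0, by simp⟩)
  have hv0 : v ≠ 0 := fun h => hv (h ▸ ⟨0, by simp⟩)
  have hq := FiniteField.isSquare_iff hchar (mul_ne_zero hu0 hv0)
  rw [hq, mul_pow]
  rcases FiniteField.pow_dichotomy hchar hu0 with h1|h1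
  · exact absurd ((FiniteField.isSquare_iff hchar hu0).2 (by simpa using h1)) hu
  rcases FiniteField.pow_dichotomy hchar hv0 with h2|h2
  · exact absurd ((FiniteField.isSquare_iff hchar hv0).2 (by simpa using h2)) hv
  simp only [ZMod.card] at h1 h2 ⊢
  rw [h1, h2]
  ring



open Finset in
lemma existsL {p : ℕ} [Fact p.Prime] (hp2 : p ≠ 2) {a : ZMod p} (ha : a ≠ 0) :
    ∃ x : ZMod p, x^4 = a ∨ (¬ IsSquare (x^4 - a)) := by
  classical
  by_contra hcon
  push_neg at hcon
  by_cases hsa : IsSquare a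
  · obtain ⟨b, hb⟩ := hsa
    by_cases hsb : IsSquare b
    · obtain ⟨y, hy⟩ := hsb
      exact (hcon y).1 (by rw [hb, hy]; ring)
    by_cases hsnb : IsSquare (-b)
    · obtain ⟨y, hy⟩ := hsnb
      refine (hcon y).1 ?_
      have : y * y = -b := hy.symm
      calc y^4 = (y*y)*(y*y) := by ring
        _ = (-b)*(-b) := by rw [this]
        _ = a := by rw [hb]; ring
    · -- Möbius injection contradiction
      set S : Finset (ZMod p) := Finset.univ.filter (fun t => IsSquare t) with hS
      have memS : ∀ t : ZMod p, t ∈ S ↔ IsSquare t := by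
        intro t; simp [hS]
      have h0S : (0 : ZMod p) ∈ S := (memS 0).2 ⟨0, by ring⟩
      have h1S : (1 : ZMod p) ∈ S := (memS 1).2 ⟨1, by ring⟩
      have hb0 : b ≠ 0 := by
        intro h; exact ha (by rw [hb, h, mul_zero])
      have h2b : (2:ZMod p) * b ≠ 0 :=
        mul_ne_zero (by
          intro h
          have : ((2:ℕ) : ZMod p) = 0 := by exact_mod_cast h
          rw [ZMod.natCast_eq_zero_iff] at this
          exact hp2 ((Nat.prime_dvd_prime_iff_eq Fact.out Nat.prime_two).1 this)) hb0
      -- facts about elements of S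
      have key : ∀ t ∈ S, (t - b ≠ 0) ∧ (t + b ≠ 0) ∧ IsSquare ((t+b)*(t-b)⁻¹) := by
        intro t htS
        obtain ⟨x, hx⟩ := (memS t).1 htS
        have htb : t - b ≠ 0 := by
          intro h
          exact hsb ⟨x, by rw [← sub_eq_zero.1 h, hx]⟩
        have htnb : t + b ≠ 0 := by
          intro h
          exact hsnb ⟨x, by rw [neg_eq_of_add_eq_zero_left h, hx]⟩
        refine ⟨htb, htnb, ?_⟩
        obtain ⟨y, hy⟩ := (hcon x).2
        refine ⟨y * (t-b)⁻¹, ?_⟩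
        have hyy : (t+b)*(t-b) = y * y := by
          rw [← hy, hx, hb]; ring
        have hinv : (t-b) * (t-b)⁻¹ = 1 := mul_inv_cancel₀ htb
        linear_combination ((t-b)⁻¹*(t-b)⁻¹)*hyy - ((t+b)*(t-b)⁻¹)*hinv
      have hmap : ∀ t ∈ S, (t+b)*(t-b)⁻¹ ∈ (S.erase 0).erase 1 := by
        intro t htS
        obtain ⟨htb, htnb, hsq⟩ := key t htS
        rw [mem_erase, mem_erase]
        refine ⟨?_, ?_, (memS _).2 hsq⟩
        · intro h
          have h' : t + b = t - b := (mul_inv_eq_one₀ htb).1 h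
          exact h2b (by linear_combination h')
        · exact mul_ne_zero htnb (inv_ne_zero htb)
      have hinj : Set.InjOn (fun t => (t+b)*(t-b)⁻¹) S := by
        intro t ht t' ht' heq
        obtain ⟨htb, -, -⟩ := key t ht
        obtain ⟨htb', -, -⟩ := key t' ht'
        simp only at heq
        have hinv : (t-b) * (t-b)⁻¹ = 1 := mul_inv_cancel₀ htb
        have hinv' : (t'-b) * (t'-b)⁻¹ = 1 := mul_inv_cancel₀ htb'
        have h1 : (t+b)*(t'-b) = (t'+b)*(t-b) := by
          linear_combination ((t-b)*(t'-b))*heq - ((t+b)*(t'-b))*hinv + ((t'+b)*(t-b))*hinv'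
        have h2 : (2:ZMod p)*b*(t' - t) = 0 := by linear_combination h1
        have := mul_eq_zero.1 h2
        rcases this with h'|h'
        · exact absurd h' h2b
        · exact (sub_eq_zero.1 h').symm
      have hcard : S.card ≤ ((S.erase 0).erase 1).card :=
        Finset.card_le_card_of_injOn _ hmap hinj
      have h1e : (1:ZMod p) ∈ S.erase 0 := mem_erase.2 ⟨one_ne_zero, h1S⟩
      have e1 : (S.erase 0).card = S.card - 1 := card_erase_of_mem h0S
      have e2 : ((S.erase 0).erase 1).card = (S.erase 0).card - 1 := card_erase_of_mem h1e
      have c1 : 1 ≤ S.card := card_pos.2 ⟨0, h0S⟩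
      have c2 : 1 ≤ (S.erase 0).card := card_pos.2 ⟨1, h1e⟩
      omega
  · by_cases hsn1 : IsSquare (-1 : ZMod p)
    · obtain ⟨i, hi⟩ := hsn1
      obtain ⟨y, hy⟩ := (hcon 0).2
      exact hsa ⟨i*y, by linear_combination (y*y)*hi - hy⟩
    · -- additive shift argument
      set S : Finset (ZMod p) := Finset.univ.filter (fun t => IsSquare t) with hS
      have memS : ∀ t : ZMod p, t ∈ S ↔ IsSquare t := by
        intro t; simp [hS]
      have h0S : (0 : ZMod p) ∈ S := (memS 0).2 ⟨0, by ring⟩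
      have hmap : ∀ t ∈ S, t - a ∈ S := by
        intro t htS
        obtain ⟨x, hx⟩ := (memS t).1 htS
        have h4 : ∃ y : ZMod p, t = y^4 := by
          by_cases hx2 : IsSquare x
          · obtain ⟨y, hy⟩ := hx2
            exact ⟨y, by rw [hx, hy]; ring⟩
          · have : IsSquare ((-1 : ZMod p) * x) := nsq_mul hp2 hsn1 hx2
            obtain ⟨y, hy⟩ := this
            exact ⟨y, by rw [hx]; linear_combination (-x + y*y)*hy⟩
        obtain ⟨y, hy⟩ := h4
        refine (memS _).2 ?_
        rw [hy]
        exact (hcon y).2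
      have hinj : ∀ t₁ ∈ S, ∀ t₂ ∈ S, t₁ - a = t₂ - a → t₁ = t₂ := by
        intro t₁ _ t₂ _ h; linear_combination h
      have hsurj := Finset.surj_on_of_inj_on_of_card_le (fun t _ => t - a)
        (fun t ht => hmap t ht) (fun t₁ t₂ h₁ h₂ h => hinj t₁ h₁ t₂ h₂ h) le_rfl 0 h0S
      obtain ⟨t, htS, ht⟩ := hsurj
      have : a = t := by linear_combination ht
      exact hsa (this ▸ (memS t).1 htS)



lemma sq2_17 {p : ℕ} (h : p = 17) : IsSquare (2 : ZMod p) := by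
  subst h; exact ⟨6, by decide⟩
lemma sq2_593 {p : ℕ} (h : p = 593) : IsSquare (2 : ZMod p) := by
  subst h; exact ⟨142, by decide⟩

lemma local_odd (p : ℕ) [Fact p.Prime] (hp2 : p ≠ 2) :
    ∃ w z : ℚ_[p], 2*w^2 = z^4 - 10081 := by
  have hp0 : ((p:ℕ) : ℚ_[p]) ≠ 0 := Nat.cast_ne_zero.2 (Fact.out : p.Prime).ne_zero
  by_cases hs2 : IsSquare (2 : ZMod p)
  · obtain ⟨b, hb⟩ := hs2
    have hb0 : b ≠ 0 := by
      intro h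
      rw [h, mul_zero] at hb
      have : ((2:ℕ) : ZMod p) = 0 := by exact_mod_cast hb
      rw [ZMod.natCast_eq_zero_iff] at this
      exact hp2 ((Nat.prime_dvd_prime_iff_eq Fact.out Nat.prime_two).1 this)
    set c : ℤ := 2*(1 - 10081*(p:ℤ)^4) with hc
    have h1 : (((b.val:ℤ)^2 - c : ℤ) : ZMod p) = 0 := by
      push_cast [hc]
      rw [ZMod.natCast_val, ZMod.cast_id, ZMod.natCast_self]
      linear_combination -hb
    have h2 : (((b.val:ℤ)) : ZMod p) ≠ 0 := by
      push_cast
      rw [ZMod.natCast_val, ZMod.cast_id]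
      exact hb0
    obtain ⟨v, hv⟩ := padic_sqrt hp2 c b.val h1 h2
    have hcq : (c : ℚ_[p]) = 2*(1 - 10081*((p:ℕ):ℚ_[p])^4) := by push_cast [hc]; ring
    rw [hcq] at hv
    refine ⟨v/(2*((p:ℕ):ℚ_[p])^2), (((p:ℕ):ℚ_[p]))⁻¹, ?_⟩
    have h20 : (2 : ℚ_[p]) ≠ 0 := two_ne_zero
    field_simp
    linear_combination hv
  · have ha : (10081 : ZMod p) ≠ 0 := by
      intro h
      have hd : p ∣ 10081 := by
        have : ((10081:ℕ) : ZMod p) = 0 := by exact_mod_cast h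
        rwa [ZMod.natCast_eq_zero_iff] at this
      have : p ∣ 17 * 593 := by norm_num at hd ⊢; exact hd
      rcases (Nat.Prime.dvd_mul Fact.out).1 this with h'|h'
      · have hp17 : p = 17 := (Nat.prime_dvd_prime_iff_eq Fact.out (by norm_num)).1 h'
        exact hs2 (sq2_17 hp17)
      · have hp593 : p = 593 := (Nat.prime_dvd_prime_iff_eq Fact.out (by norm_num)).1 h'
        exact hs2 (sq2_593 hp593)
    obtain ⟨x, hx⟩ := existsL hp2 ha
    rcases hx with hx4 | hnsq
    · have hx0 : x ≠ 0 := by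
        intro h
        rw [h] at hx4
        exact ha (by rw [← hx4]; ring)
      have h1 : (((x.val:ℤ)^4 - 10081 : ℤ) : ZMod p) = 0 := by
        push_cast
        rw [ZMod.natCast_val, ZMod.cast_id]
        linear_combination hx4
      have h2 : (((x.val:ℤ)) : ZMod p) ≠ 0 := by
        push_cast
        rw [ZMod.natCast_val, ZMod.cast_id]
        exact hx0
      obtain ⟨Z, hZ⟩ := padic_quartic hp2 10081 x.val h1 h2
      refine ⟨0, Z, ?_⟩
      rw [hZ]
      push_cast
      ring
    · have hne : x^4 - (10081 : ZMod p) ≠ 0 := fun h => hnsq (h ▸ ⟨0, by ring⟩)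
      have hsq : IsSquare ((2:ZMod p) * (x^4 - 10081)) := nsq_mul hp2 hs2 hnsq
      obtain ⟨r, hr⟩ := hsq
      have hr0 : r ≠ 0 := by
        intro h
        rw [h, mul_zero] at hr
        have h20 : (2 : ZMod p) ≠ 0 := by
          intro h
          have : ((2:ℕ) : ZMod p) = 0 := by exact_mod_cast h
          rw [ZMod.natCast_eq_zero_iff] at this
          exact hp2 ((Nat.prime_dvd_prime_iff_eq Fact.out Nat.prime_two).1 this)
        exact (mul_ne_zero h20 hne) hr
      set c : ℤ := 2*((x.val:ℤ)^4 - 10081) with hc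
      have h1 : (((r.val:ℤ)^2 - c : ℤ) : ZMod p) = 0 := by
        push_cast [hc]
        rw [ZMod.natCast_val, ZMod.cast_id, ZMod.natCast_val, ZMod.cast_id]
        linear_combination -hr
      have h2 : (((r.val:ℤ)) : ZMod p) ≠ 0 := by
        push_cast
        rw [ZMod.natCast_val, ZMod.cast_id]
        exact hr0
      obtain ⟨v, hv⟩ := padic_sqrt hp2 c r.val h1 h2
      have hcq : (c : ℚ_[p]) = 2*(((x.val:ℕ):ℚ_[p])^4 - 10081) := by push_cast [hc]; ring
      rw [hcq] at hv
      refine ⟨v/2, ((x.val:ℕ):ℚ_[p]), ?_⟩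
      linear_combination hv / 2


lemma dec17a : ((10081:ℤ) : ZMod 17) = 0 := by decide
lemma dec17b : (2:ZMod 17)^4 = -1 := by decide
lemma dec17c : ((1:ℤ) : ZMod 17) ≠ -1 := by decide
lemma dec593a : ((10081:ℤ) : ZMod 593) = 0 := by decide
set_option maxRecDepth 10000 in
lemma dec593b : (2:ZMod 593)^148 = 1 := by decide
lemma dec593c : ((-1:ℤ) : ZMod 593) ≠ 1 := by decide
lemma dec8 : ZMod.χ₈ ((10081:ℕ) : ZMod 8) = 1 := by decide
lemma dec4 : ZMod.χ₄ ((10081:ℕ) : ZMod 4) = 1 := by decide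

lemma core (m n s : ℤ) (hco : IsCoprime m n)
    (h : 2*s^2 = m^4 - 10081*n^4) : False := by
  haveI : Fact (Nat.Prime 17) := ⟨by norm_num⟩
  haveI : Fact (Nat.Prime 593) := ⟨by norm_num⟩
  have i17 : Prime (17:ℤ) := by norm_num
  have i593 : Prime (593:ℤ) := by norm_num
  have coprime_contra : ∀ q : ℤ, Prime q → q ∣ m → q ∣ n → False := by
    intro q hq hqm hqn
    obtain ⟨a, b, hab⟩ := hco
    have : q ∣ 1 := by
      rw [← hab]
      exact dvd_add (Dvd.dvd.mul_left hqm a) (Dvd.dvd.mul_left hqn b)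
    exact hq.not_unit (isUnit_of_dvd_one this)
  have f1 : ¬ (17:ℤ) ∣ m := by
    rintro ⟨m', rfl⟩
    have hs17 : (17:ℤ) ∣ s := by
      have : (17:ℤ) ∣ 2*s^2 := ⟨17^3*m'^4 - 593*n^4, by linear_combination h⟩
      rcases i17.dvd_mul.1 this with h'|h'
      · norm_num at h'
      · exact i17.dvd_of_dvd_pow h'
    obtain ⟨s', rfl⟩ := hs17
    have hc : 593*n^4 = 17*(17^2*m'^4 - 2*s'^2) := by
      have h17 : (17:ℤ) * (593*n^4) = 17*(17*(17^2*m'^4 - 2*s'^2)) := by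
        linear_combination h
      exact mul_left_cancel₀ (by norm_num) h17
    have h17n : (17:ℤ) ∣ n := by
      have : (17:ℤ) ∣ 593*n^4 := ⟨_, hc⟩
      rcases i17.dvd_mul.1 this with h'|h'
      · norm_num at h'
      · exact i17.dvd_of_dvd_pow h'
    exact coprime_contra 17 i17 ⟨m', by ring⟩ h17n
  have f2 : ¬ (593:ℤ) ∣ m := by
    rintro ⟨m', rfl⟩
    have hs593 : (593:ℤ) ∣ s := by
      have : (593:ℤ) ∣ 2*s^2 := ⟨593^3*m'^4 - 17*n^4, by linear_combination h⟩
      rcases i593.dvd_mul.1 this with h'|h'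
      · norm_num at h'
      · exact i593.dvd_of_dvd_pow h'
    obtain ⟨s', rfl⟩ := hs593
    have hc : 17*n^4 = 593*(593^2*m'^4 - 2*s'^2) := by
      have h593 : (593:ℤ) * (17*n^4) = 593*(593*(593^2*m'^4 - 2*s'^2)) := by
        linear_combination h
      exact mul_left_cancel₀ (by norm_num) h593
    have h593n : (593:ℤ) ∣ n := by
      have : (593:ℤ) ∣ 17*n^4 := ⟨_, hc⟩
      rcases i593.dvd_mul.1 this with h'|h'
      · norm_num at h'
      · exact i593.dvd_of_dvd_pow h'
    exact coprime_contra 593 i593 ⟨m', by ring⟩ h593n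
  have f3 : ¬ (17:ℤ) ∣ s := by
    rintro ⟨s', rfl⟩
    apply f1
    apply i17.dvd_of_dvd_pow (n := 4)
    exact ⟨2*17*s'^2 + 593*n^4, by linear_combination -h⟩
  have f4 : ¬ (593:ℤ) ∣ s := by
    rintro ⟨s', rfl⟩
    apply f2
    apply i593.dvd_of_dvd_pow (n := 4)
    exact ⟨2*593*s'^2 + 17*n^4, by linear_combination -h⟩
  have f5 : s ≠ 0 := by
    rintro rfl
    apply f1
    apply i17.dvd_of_dvd_pow (n := 4)
    exact ⟨593*n^4, by linear_combination -h⟩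
  have hm17 : ((m : ZMod 17)) ≠ 0 := by
    rw [Ne, ZMod.intCast_zmod_eq_zero_iff_dvd]
    exact_mod_cast f1
  have hm593 : ((m : ZMod 593)) ≠ 0 := by
    rw [Ne, ZMod.intCast_zmod_eq_zero_iff_dvd]
    exact_mod_cast f2
  have hs17 : ((s : ZMod 17)) ≠ 0 := by
    rw [Ne, ZMod.intCast_zmod_eq_zero_iff_dvd]
    exact_mod_cast f3
  have hs593 : ((s : ZMod 593)) ≠ 0 := by
    rw [Ne, ZMod.intCast_zmod_eq_zero_iff_dvd]
    exact_mod_cast f4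
  have g1 : jacobiSym s 17 = -1 := by
    have h17 : (2:ZMod 17)*(s:ZMod 17)^2 = (m:ZMod 17)^4 := by
      have hz : ((10081:ℤ) : ZMod 17) = 0 := dec17a
      have := congrArg (fun t : ℤ => ((t : ZMod 17))) h
      push_cast at this hz
      linear_combination this - ((n:ZMod 17)^4) * hz
    have hm16 : ((m:ZMod 17))^16 = 1 := by
      have := ZMod.pow_card_sub_one_eq_one hm17
      norm_num at this
      exact this
    have hs8 : ((s:ZMod 17))^8 = -1 := by
      have e : (2:ZMod 17)^4 * ((s:ZMod 17)^2)^4 = ((m:ZMod 17))^16 := by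
        rw [← mul_pow, h17, ← pow_mul]
      rw [hm16] at e
      have e2 : (2:ZMod 17)^4 = -1 := dec17b
      rw [e2] at e
      linear_combination -e
    have hleg : (legendreSym 17 s : ZMod 17) = -1 := by
      rw [legendreSym.eq_pow]
      exact_mod_cast hs8
    rcases legendreSym.eq_one_or_neg_one 17 hs17 with h'|h'
    · rw [h'] at hleg
      exact absurd hleg dec17c
    · rw [← jacobiSym.legendreSym.to_jacobiSym]; exact h'
  have g2 : jacobiSym s 593 = 1 := by
    have h593 : (2:ZMod 593)*(s:ZMod 593)^2 = (m:ZMod 593)^4 := by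
      have hz : ((10081:ℤ) : ZMod 593) = 0 := dec593a
      have := congrArg (fun t : ℤ => ((t : ZMod 593))) h
      push_cast at this hz
      linear_combination this - ((n:ZMod 593)^4) * hz
    have hm592 : ((m:ZMod 593))^592 = 1 := by
      have := ZMod.pow_card_sub_one_eq_one hm593
      norm_num at this
      exact this
    have hs296 : ((s:ZMod 593))^296 = 1 := by
      have e : (2:ZMod 593)^148 * ((s:ZMod 593)^2)^148 = ((m:ZMod 593))^592 := by
        rw [← mul_pow, h593, ← pow_mul]
      rw [hm592] at e
      have e2 : (2:ZMod 593)^148 = 1 := dec593b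
      rw [e2, one_mul] at e
      rw [← e]; ring
    have hleg : (legendreSym 593 s : ZMod 593) = 1 := by
      rw [legendreSym.eq_pow]
      exact_mod_cast hs296
    rcases legendreSym.eq_one_or_neg_one 593 hs593 with h'|h'
    · rw [← jacobiSym.legendreSym.to_jacobiSym]; exact h'
    · rw [h'] at hleg
      exact absurd hleg dec593c
  have g3 : jacobiSym s 10081 = -1 := by
    have h10081 : (10081:ℕ) = 17 * 593 := by norm_num
    rw [h10081, jacobiSym.mul_right, g1, g2]
    norm_num
  -- global side
  set S : ℕ := s.natAbs with hSdef
  have hS0 : S ≠ 0 := fun hh => f5 (Int.natAbs_eq_zero.1 hh)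
  set e : ℕ := S.factorization 2 with hedef
  set d : ℕ := S / 2 ^ e with hddef
  have hdodd : ¬ 2 ∣ d := Nat.not_dvd_ordCompl Nat.prime_two hS0
  have hdS : d ∣ S := Nat.ordCompl_dvd S 2
  have hdec : 2 ^ e * d = S := Nat.ordProj_mul_ordCompl_eq_self S 2
  have hds : (d:ℤ) ∣ s := Int.dvd_natAbs.1 (Int.natCast_dvd_natCast.2 hdS)
  have hOddd : Odd d := Nat.odd_iff.2 (by
    rcases Nat.mod_two_eq_zero_or_one d with h'|h'
    · exact absurd (Nat.dvd_of_mod_eq_zero h') hdodd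
    · exact h')
  have hprime_d : ∀ q : ℕ, q.Prime → q ∣ d → ¬ (q:ℤ) ∣ m ∧ ¬ (q:ℤ) ∣ n := by
    intro q hq hqd
    have hqs : (q:ℤ) ∣ s := dvd_trans (Int.natCast_dvd_natCast.2 hqd) hds
    have hq17 : q ≠ 17 := by
      rintro rfl; exact f3 (by exact_mod_cast hqs)
    have hq593 : q ≠ 593 := by
      rintro rfl; exact f4 (by exact_mod_cast hqs)
    have hqZ : Prime (q:ℤ) := Nat.prime_iff_prime_int.mp hq
    constructor
    · intro hqm
      have hdvd : (q:ℤ) ∣ 10081*n^4 := by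
        obtain ⟨s', hs'⟩ := hqs
        obtain ⟨m', hm'⟩ := hqm
        exact ⟨(q:ℤ)^3*m'^4 - 2*q*s'^2, by rw [hs', hm'] at h; linear_combination h⟩
      rcases hqZ.dvd_mul.1 hdvd with h'|h'
      · have hq10081 : (q:ℕ) ∣ 10081 := by exact_mod_cast h'
        have : q ∣ 17*593 := by norm_num at hq10081 ⊢; exact hq10081
        rcases (Nat.Prime.dvd_mul hq).1 this with h''|h''
        · exact hq17 ((Nat.prime_dvd_prime_iff_eq hq (by norm_num)).1 h'')
        · exact hq593 ((Nat.prime_dvd_prime_iff_eq hq (by norm_num)).1 h'')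
      · have hqn : (q:ℤ) ∣ n := hqZ.dvd_of_dvd_pow h'
        obtain ⟨a, b, hab⟩ := hco
        have : (q:ℤ) ∣ 1 := by
          rw [← hab]
          exact dvd_add (Dvd.dvd.mul_left hqm a) (Dvd.dvd.mul_left hqn b)
        exact hqZ.not_unit (isUnit_of_dvd_one this)
    · intro hqn
      have hqm : (q:ℤ) ∣ m := by
        apply hqZ.dvd_of_dvd_pow (n := 4)
        obtain ⟨s', hs'⟩ := hqs
        obtain ⟨n', hn'⟩ := hqn
        exact ⟨2*q*s'^2 + 10081*q^3*n'^4, by rw [hs', hn'] at h; linear_combination -h⟩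
      obtain ⟨a, b, hab⟩ := hco
      have : (q:ℤ) ∣ 1 := by
        rw [← hab]
        exact dvd_add (Dvd.dvd.mul_left hqm a) (Dvd.dvd.mul_left hqn b)
      exact hqZ.not_unit (isUnit_of_dvd_one this)
  have hgcd_m : Int.gcd m d = 1 := by
    by_contra hg
    obtain ⟨q, hq, hqm, hqd⟩ := Nat.Prime.not_coprime_iff_dvd.1 hg
    exact (hprime_d q hq hqd).1 (Int.dvd_natAbs.1 (Int.natCast_dvd_natCast.2 hqm))
  have hgcd_n : Int.gcd n d = 1 := by
    by_contra hg
    obtain ⟨q, hq, hqn, hqd⟩ := Nat.Prime.not_coprime_iff_dvd.1 hg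
    exact (hprime_d q hq hqd).2 (Int.dvd_natAbs.1 (Int.natCast_dvd_natCast.2 hqn))
  have hmoddvd : (d:ℤ) ∣ m^4 - 10081*n^4 := by
    obtain ⟨s', hs'⟩ := hds
    exact ⟨2*d*s'^2, by rw [← h, hs']; ring⟩
  have hmod : ((10081*n^4 : ℤ)) % (d:ℤ) = ((m^4 : ℤ)) % (d:ℤ) :=
    Int.modEq_iff_dvd.2 hmoddvd
  have hJ1 : jacobiSym (10081:ℤ) d * jacobiSym n d ^ 4 = jacobiSym m d ^ 4 := by
    rw [← jacobiSym.pow_left, ← jacobiSym.pow_left, ← jacobiSym.mul_left]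
    exact jacobiSym.mod_left' hmod
  have hJn : jacobiSym n d ^ 4 = 1 := by
    rcases jacobiSym.trichotomy n d with h'|h'|h'
    · exfalso
      rw [jacobiSym.eq_zero_iff] at h'
      exact h'.2 hgcd_n
    · rw [h']; norm_num
    · rw [h']; norm_num
  have hJm : jacobiSym m d ^ 4 = 1 := by
    rcases jacobiSym.trichotomy m d with h'|h'|h'
    · exfalso
      rw [jacobiSym.eq_zero_iff] at h'
      exact h'.2 hgcd_m
    · rw [h']; norm_num
    · rw [h']; norm_num
  have hJ10081d : jacobiSym (10081:ℤ) d = 1 := by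
    rw [hJn, mul_one, hJm] at hJ1
    exact hJ1
  have hrec : jacobiSym (d:ℤ) 10081 = 1 := by
    have := jacobiSym.quadratic_reciprocity_one_mod_four
      (a := 10081) (b := d) (by norm_num) hOddd
    rw [← this]
    exact_mod_cast hJ10081d
  -- compute jacobiSym s 10081 from the decomposition
  have hodd10081 : Odd (10081:ℕ) := ⟨5040, by norm_num⟩
  have hJ2 : jacobiSym 2 10081 = 1 := by
    rw [jacobiSym.at_two hodd10081]
    exact dec8
  have hJneg1 : jacobiSym (-1) 10081 = 1 := by
    rw [jacobiSym.at_neg_one hodd10081]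
    exact dec4
  have hJS : jacobiSym ((S:ℤ)) 10081 = 1 := by
    have hcast : ((S:ℤ)) = 2^e * (d:ℤ) := by
      exact_mod_cast congrArg (fun t : ℕ => (t:ℤ)) hdec.symm
    rw [hcast, jacobiSym.mul_left, jacobiSym.pow_left, hJ2, hrec]
    norm_num
  rcases Int.natAbs_eq s with hs'|hs'
  · rw [hSdef] at hJS
    rw [← hs'] at hJS
    rw [g3] at hJS
    norm_num at hJS
  · have : jacobiSym s 10081 = 1 := by
      rw [hs', show (-(S:ℤ)) = -1 * (S:ℤ) by ring, jacobiSym.mul_left, hJneg1, hJS]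
      norm_num
    rw [g3] at this
    norm_num at this



lemma no_rat : ¬ ∃ w z : ℚ, 2 * w ^ 2 = z ^ 4 - 10081 := by
  rintro ⟨w, z, h⟩
  set m : ℤ := z.num with hm
  set s : ℤ := w.num with hs
  have hn0 : ((z.den : ℤ)) ≠ 0 := by exact_mod_cast z.den_nz
  have ht0 : ((w.den : ℤ)) ≠ 0 := by exact_mod_cast w.den_nz
  have hnQ : ((z.den : ℚ)) ≠ 0 := by exact_mod_cast z.den_nz
  have htQ : ((w.den : ℚ)) ≠ 0 := by exact_mod_cast w.den_nz
  have hw : (w : ℚ) = (s:ℚ) / (w.den:ℚ) := by exact_mod_cast (Rat.num_div_den w).symm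
  have hz : (z : ℚ) = (m:ℚ) / (z.den:ℚ) := by exact_mod_cast (Rat.num_div_den z).symm
  rw [hw, hz] at h
  field_simp at h
  have E : 2*s^2*(z.den:ℤ)^4 = (m^4 - 10081*(z.den:ℤ)^4)*(w.den:ℤ)^2 := by
    exact_mod_cast (by linear_combination h :
      2*(s:ℚ)^2*((z.den:ℚ))^4 = ((m:ℚ)^4 - 10081*((z.den:ℚ))^4)*((w.den:ℚ))^2)
  set n : ℤ := (z.den : ℤ) with hn
  set t : ℤ := (w.den : ℤ) with ht
  have hcopmn : IsCoprime m n := by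
    rw [Int.isCoprime_iff_gcd_eq_one]
    simpa [Int.gcd, hn] using z.reduced
  have hcopst : IsCoprime s t := by
    rw [Int.isCoprime_iff_gcd_eq_one]
    simpa [Int.gcd, ht] using w.reduced
  -- n^4 divides t^2
  have hcop4 : IsCoprime (n^4) (m^4 - 10081*n^4) := by
    have h1 : IsCoprime (n^4) (m^4) := (hcopmn.symm).pow
    have h2 := h1.add_mul_left_right (-10081)
    have : m^4 + n^4 * (-10081) = m^4 - 10081*n^4 := by ring
    rwa [this] at h2
  have hA1 : n^4 ∣ t^2 := by
    apply hcop4.dvd_of_dvd_mul_left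
    show n^4 ∣ (m^4 - 10081*n^4) * t^2
    exact ⟨2*s^2, by linear_combination -E⟩
  have hA2 : t^2 ∣ 2*n^4 := by
    have hcst : IsCoprime (t^2) (s^2) := (hcopst.symm).pow
    apply hcst.dvd_of_dvd_mul_right
    show t^2 ∣ (2*n^4) * s^2
    exact ⟨m^4 - 10081*n^4, by linear_combination E⟩
  obtain ⟨k, hk⟩ := hA1
  have hk2 : k ∣ 2 := by
    have h1 : n^4 * k ∣ n^4 * 2 := by
      rw [← hk]
      have : n^4 * 2 = 2 * n^4 := by ring
      rw [this]
      exact hA2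
    exact (mul_dvd_mul_iff_left (pow_ne_zero 4 hn0)).1 h1
  have hkpos : 0 < k := by
    have h1 : 0 < t^2 := by positivity
    have h2 : 0 < n^4 := by positivity
    nlinarith [hk]
  have hkle : k ≤ 2 := Int.le_of_dvd (by norm_num) hk2
  interval_cases k
  · -- t^2 = n^4
    rw [mul_one] at hk
    have hE2 : 2*s^2*n^4 = (m^4 - 10081*n^4)*n^4 := by rw [E, hk]
    have h2s : 2*s^2 = m^4 - 10081*n^4 :=
      mul_right_cancel₀ (pow_ne_zero 4 hn0) hE2
    exact core m n s hcopmn h2s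
  · -- t^2 = 2 * n^4 : impossible by 2-adic valuation
    have hT0 : t.natAbs ≠ 0 := fun hh => ht0 (Int.natAbs_eq_zero.1 hh)
    have hN0 : n.natAbs ≠ 0 := fun hh => hn0 (Int.natAbs_eq_zero.1 hh)
    have hNat : t.natAbs^2 = n.natAbs^4 * 2 := by
      have := congrArg Int.natAbs hk
      simpa [Int.natAbs_mul, Int.natAbs_pow] using this
    have hfac := congrArg (fun x : ℕ => x.factorization 2) hNat
    simp only [Nat.factorization_pow, Nat.factorization_mul (pow_ne_zero 4 hN0) two_ne_zero,
      Nat.Prime.factorization Nat.prime_two] at hfac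
    simp [Finsupp.smul_apply, Finsupp.add_apply, Finsupp.single_apply] at hfac
    omega


theorem stmt17 :
    (∃ w z : ℝ, 2 * w ^ 2 = z ^ 4 - 10081) ∧
    (∀ (p : ℕ) [Fact p.Prime], ∃ w z : ℚ_[p], 2 * w ^ 2 = z ^ 4 - 10081) ∧
    ¬ ∃ w z : ℚ, 2 * w ^ 2 = z ^ 4 - 10081 := by
  refine ⟨⟨Real.sqrt 2280, 11, ?_⟩, ?_, no_rat⟩
  · rw [Real.sq_sqrt (by norm_num : (0:ℝ) ≤ 2280)]
    norm_num
  · intro p hp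
    rcases eq_or_ne p 2 with rfl|hp2
    · obtain ⟨u, hu⟩ := padic_sqrt_neg15
      refine ⟨16*u, 7, ?_⟩
      have : ((-15 : ℤ) : ℚ_[2]) = -15 := by push_cast; ring
      norm_num at hu
      linear_combination (512:ℚ_[2])*hu
    · exact local_odd p hp2
end
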